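/- arXiv:2209.11637 — 6 statements merged into one kernel-verified Lean document; each statement's English description precedes it below -/
import Mathlib

section
/- The Oseen tensor U satisfies the Lipschitz-type estimate |U(x) − U(y)| ≤ C|x−y|(1/|x|² + 1/|y|²) for all x, y ∈ ℝ³ \ {0}, for some constant C > 0. -/
open scoped RealInnerProductSpace

/-- The Oseen tensor `U(x) = (1/(8π|x|))(Id + (x⊗x)/|x|²)`, viewed as the linear map
`v ↦ U(x) v` on `ℝ³`. -/
noncomputable def oseen (x v : EuclideanSpace ℝ (Fin 3)) : EuclideanSpace ℝ (Fin 3) :=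
  (1 / (8 * Real.pi * ‖x‖)) • (v + (⟪x, v⟫ / ‖x‖ ^ 2) • x)

/-!
Writing `x̂ = x / |x|`, one has `U(x) v = (8π)⁻¹ |x|⁻¹ (v + ⟪x̂, v⟫ x̂)`. The difference
`U(x) − U(y)` splits into the change of the factor `|x|⁻¹`, which is at most
`|x − y| / (|x| |y|)`, and the change of the projection `v ↦ ⟪x̂, v⟫ x̂`, which is Lipschitz in `x̂`,
while `|x̂ − ŷ| ≤ 2 |x − y| / |x|`. Altogether `|U(x) − U(y)| ≤ (3/(4π)) |x − y| / (|x| |y|)`,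
and `2 / (|x| |y|) ≤ 1/|x|² + 1/|y|²`.
-/

open NormedSpace

lemma abs_inv_norm_sub_inv_norm_le {G : Type*} [NormedAddCommGroup G] {x y : G} (hx : x ≠ 0)
    (hy : y ≠ 0) :
    |‖x‖⁻¹ - ‖y‖⁻¹| ≤ ‖x - y‖ / (‖x‖ * ‖y‖) := by
  have h := dist_inv_inv₀ (norm_ne_zero_iff.mpr hx) (norm_ne_zero_iff.mpr hy)
  rw [Real.dist_eq, Real.dist_eq, Real.norm_eq_abs, Real.norm_eq_abs, abs_norm, abs_norm] at h
  rw [h]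
  gcongr
  exact abs_norm_sub_norm_le x y

section Normed

variable {V : Type*} [NormedAddCommGroup V] [NormedSpace ℝ V]

lemma norm_normalize_le (x : V) : ‖normalize x‖ ≤ 1 := by
  by_cases hx : x = 0
  · simp [hx, normalize_zero_eq_zero]
  · exact (norm_normalize hx).le

lemma norm_normalize_sub_normalize_le {x : V} (hx : x ≠ 0) (y : V) :
    ‖normalize x - normalize y‖ ≤ 2 * ‖x - y‖ / ‖x‖ := by
  have hx' : 0 < ‖x‖ := norm_pos_iff.mpr hx
  have split : normalize x - normalize y
      = ‖x‖⁻¹ • (x - y) + ‖x‖⁻¹ • (‖y‖ - ‖x‖) • normalize y := by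
    rw [show normalize x = ‖x‖⁻¹ • x from rfl]
    linear_combination (norm := module)
      -(‖x‖⁻¹ : ℝ) • norm_smul_normalize y + inv_mul_cancel₀ hx'.ne' • normalize y
  calc ‖normalize x - normalize y‖
      ≤ ‖x‖⁻¹ * ‖x - y‖ + ‖x‖⁻¹ * (|‖y‖ - ‖x‖| * ‖normalize y‖) := by
        rw [split]
        refine (norm_add_le _ _).trans_eq ?_
        simp only [norm_smul, Real.norm_eq_abs, abs_inv, abs_norm]
    _ ≤ ‖x‖⁻¹ * ‖x - y‖ + ‖x‖⁻¹ * (‖x - y‖ * 1) := by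
        gcongr
        · rw [abs_sub_comm]; exact abs_norm_sub_norm_le x y
        · exact norm_normalize_le y
    _ = 2 * ‖x - y‖ / ‖x‖ := by field_simp; ring

end Normed

section InnerProduct

variable {E : Type*} [NormedAddCommGroup E] [InnerProductSpace ℝ E]

lemma norm_add_inner_smul_le {u : E} (hu : ‖u‖ ≤ 1) (v : E) :
    ‖v + ⟪u, v⟫ • u‖ ≤ 2 * ‖v‖ :=
  calc ‖v + ⟪u, v⟫ • u‖ ≤ ‖v‖ + ‖u‖ * ‖v‖ * ‖u‖ := by
        refine (norm_add_le _ _).trans ?_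
        rw [norm_smul, Real.norm_eq_abs]
        gcongr
        exact abs_real_inner_le_norm u v
    _ ≤ ‖v‖ + 1 * ‖v‖ * 1 := by gcongr
    _ = 2 * ‖v‖ := by ring

lemma norm_inner_smul_sub_inner_smul_le {u w : E} (hu : ‖u‖ ≤ 1) (hw : ‖w‖ ≤ 1) (v : E) :
    ‖⟪u, v⟫ • u - ⟪w, v⟫ • w‖ ≤ 2 * ‖u - w‖ * ‖v‖ := by
  have split : ⟪u, v⟫ • u - ⟪w, v⟫ • w = ⟪u - w, v⟫ • u + ⟪w, v⟫ • (u - w) := by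
    rw [inner_sub_left]; module
  calc ‖⟪u, v⟫ • u - ⟪w, v⟫ • w‖
      ≤ ‖u - w‖ * ‖v‖ * ‖u‖ + ‖w‖ * ‖v‖ * ‖u - w‖ := by
        rw [split]
        refine (norm_add_le _ _).trans ?_
        rw [norm_smul, norm_smul, Real.norm_eq_abs, Real.norm_eq_abs]
        gcongr <;> exact abs_real_inner_le_norm _ _
    _ ≤ ‖u - w‖ * ‖v‖ * 1 + 1 * ‖v‖ * ‖u - w‖ := by gcongr
    _ = 2 * ‖u - w‖ * ‖v‖ := by ring

lemma norm_inv_norm_smul_add_inner_normalize_sub_le {x y : E} (hx : x ≠ 0) (hy : y ≠ 0)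
    (v : E) :
    ‖‖x‖⁻¹ • (v + ⟪normalize x, v⟫ • normalize x)
        - ‖y‖⁻¹ • (v + ⟪normalize y, v⟫ • normalize y)‖
      ≤ 6 * ‖x - y‖ / (‖x‖ * ‖y‖) * ‖v‖ := by
  set u := normalize x
  set w := normalize y
  have split : ‖x‖⁻¹ • (v + ⟪u, v⟫ • u) - ‖y‖⁻¹ • (v + ⟪w, v⟫ • w)
      = (‖x‖⁻¹ - ‖y‖⁻¹) • (v + ⟪u, v⟫ • u) + ‖y‖⁻¹ • (⟪u, v⟫ • u - ⟪w, v⟫ • w) := by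
    module
  calc ‖‖x‖⁻¹ • (v + ⟪u, v⟫ • u) - ‖y‖⁻¹ • (v + ⟪w, v⟫ • w)‖
      ≤ |‖x‖⁻¹ - ‖y‖⁻¹| * ‖v + ⟪u, v⟫ • u‖ + ‖y‖⁻¹ * ‖⟪u, v⟫ • u - ⟪w, v⟫ • w‖ := by
        rw [split]
        refine (norm_add_le _ _).trans_eq ?_
        simp only [norm_smul, Real.norm_eq_abs, abs_inv, abs_norm]
    _ ≤ ‖x - y‖ / (‖x‖ * ‖y‖) * (2 * ‖v‖)
          + ‖y‖⁻¹ * (2 * (2 * ‖x - y‖ / ‖x‖) * ‖v‖) := by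
        gcongr
        · exact abs_inv_norm_sub_inv_norm_le hx hy
        · exact norm_add_inner_smul_le (norm_normalize_le x) v
        · refine (norm_inner_smul_sub_inner_smul_le (norm_normalize_le x)
            (norm_normalize_le y) v).trans ?_
          gcongr
          exact norm_normalize_sub_normalize_le hx y
    _ = 6 * ‖x - y‖ / (‖x‖ * ‖y‖) * ‖v‖ := by field_simp; ring

end InnerProduct

lemma oseen_eq_smul_normalize (x v : EuclideanSpace ℝ (Fin 3)) :
    oseen x v = (8 * Real.pi)⁻¹ • ‖x‖⁻¹ • (v + ⟪normalize x, v⟫ • normalize x) := by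
  by_cases hx : x = 0
  · simp [oseen, hx, normalize_zero_eq_zero]
  have hx' : ‖x‖ ≠ 0 := norm_ne_zero_iff.mpr hx
  simp only [oseen, NormedSpace.normalize, real_inner_smul_left, smul_smul, smul_add]
  congr 2 <;> field_simp

lemma norm_oseen_sub_oseen_le {x y : EuclideanSpace ℝ (Fin 3)} (hx : x ≠ 0) (hy : y ≠ 0)
    (v : EuclideanSpace ℝ (Fin 3)) :
    ‖oseen x v - oseen y v‖ ≤ 3 / (4 * Real.pi) * (‖x - y‖ / (‖x‖ * ‖y‖)) * ‖v‖ := by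
  rw [oseen_eq_smul_normalize, oseen_eq_smul_normalize, ← smul_sub, norm_smul,
    Real.norm_eq_abs, abs_of_pos (by positivity)]
  calc (8 * Real.pi)⁻¹ * ‖_‖ ≤ (8 * Real.pi)⁻¹ * (6 * ‖x - y‖ / (‖x‖ * ‖y‖) * ‖v‖) := by
        gcongr
        exact norm_inv_norm_smul_add_inner_normalize_sub_le hx hy v
    _ = _ := by field_simp; ring

/-- The Oseen tensor satisfies the Lipschitz-type operator-norm estimate
`|U(x) − U(y)| ≤ C |x−y| (1/|x|² + 1/|y|²)` for `x, y ∈ ℝ³ \ {0}`. -/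
theorem oseen_lipschitz_bound :
    ∃ C : ℝ, 0 < C ∧ ∀ x y : EuclideanSpace ℝ (Fin 3), x ≠ 0 → y ≠ 0 →
      ∀ v : EuclideanSpace ℝ (Fin 3),
        ‖oseen x v - oseen y v‖ ≤ C * ‖x - y‖ * (1 / ‖x‖ ^ 2 + 1 / ‖y‖ ^ 2) * ‖v‖ := by
  refine ⟨3 / (8 * Real.pi), by positivity, fun x y hx hy v => ?_⟩
  have am_gm : 2 * (1 / ‖x‖) * (1 / ‖y‖) ≤ (1 / ‖x‖) ^ 2 + (1 / ‖y‖) ^ 2 :=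
    two_mul_le_add_sq _ _
  calc ‖oseen x v - oseen y v‖
      ≤ 3 / (4 * Real.pi) * (‖x - y‖ / (‖x‖ * ‖y‖)) * ‖v‖ := norm_oseen_sub_oseen_le hx hy v
    _ = 3 / (8 * Real.pi) * ‖x - y‖ * (2 * (1 / ‖x‖) * (1 / ‖y‖)) * ‖v‖ := by
        field_simp; ring
    _ ≤ 3 / (8 * Real.pi) * ‖x - y‖ * (1 / ‖x‖ ^ 2 + 1 / ‖y‖ ^ 2) * ‖v‖ := by
        rw [one_div_pow, one_div_pow] at am_gm
        gcongr
end

section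
/- There exists a constant K > 0 such that for every multi-index α ∈ ℕ³ and every x ∈ ℝ³ \ {0}, the partial derivative ∂^α of the function x ↦ 1/|x| satisfies |∂^α (1/|x|)| ≤ K^{|α|} |α|! / |x|^{1+|α|}. -/
/-- Iterated partial derivative of a scalar function on `ℝ³` along a list of coordinate
directions. -/
noncomputable def pderivList :
    List (Fin 3) → (EuclideanSpace ℝ (Fin 3) → ℝ) → (EuclideanSpace ℝ (Fin 3) → ℝ)
  | [], f => f
  | (i :: L), f => fun x => fderiv ℝ (pderivList L f) x (EuclideanSpace.single i 1)

/-- The partial derivative `∂^α` for a multi-index `α ∈ ℕ³` : we differentiate `α i` times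
in each coordinate direction `i`. -/
noncomputable def multiDeriv (α : Fin 3 → ℕ) (f : EuclideanSpace ℝ (Fin 3) → ℝ) :
    EuclideanSpace ℝ (Fin 3) → ℝ :=
  pderivList ((List.finRange 3).flatMap fun i => List.replicate (α i) i) f

/-!
Differentiating `P(x) ‖x‖^(-(2n+1))`, with `P` homogeneous of degree `n`, in the direction `eᵢ`
gives `Q(x) ‖x‖^(-(2n+3))` with `Q = ‖x‖² ∂ᵢP - (2n+1) xᵢ P`, homogeneous of degree `n+1`. So
`∂^α (1/‖x‖) = P_α(x) ‖x‖^(-(2|α|+1))` for polynomials `P_α` defined by this recursion. On the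
ℓ¹ norm of the coefficients, `∂ᵢ` costs a factor `n`, `‖x‖²` a factor `d = 3` and `xᵢ` nothing,
so `‖Q‖₁ ≤ (d n + 2n + 1) ‖P‖₁ ≤ (d+2)(n+1) ‖P‖₁` and `‖P_α‖₁ ≤ 5^|α| |α|!`. Finally
`|P_α(x)| ≤ ‖P_α‖₁ ‖x‖^|α|` by homogeneity.
-/

open MvPolynomial

namespace MvPolynomial

variable {σ : Type*}

noncomputable def l1Norm (P : MvPolynomial σ ℝ) : ℝ :=
  ∑ m ∈ P.support, |coeff m P|

theorem l1Norm_eq_sum_of_support_subset {P : MvPolynomial σ ℝ} {s : Finset (σ →₀ ℕ)}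
    (hs : P.support ⊆ s) : l1Norm P = ∑ m ∈ s, |coeff m P| :=
  Finset.sum_subset hs fun m _ hm => by rw [notMem_support_iff.mp hm, abs_zero]

theorem l1Norm_add_le (P Q : MvPolynomial σ ℝ) : l1Norm (P + Q) ≤ l1Norm P + l1Norm Q := by
  classical
  rw [l1Norm_eq_sum_of_support_subset support_add,
    l1Norm_eq_sum_of_support_subset (Finset.subset_union_left (s₂ := Q.support)),
    l1Norm_eq_sum_of_support_subset (Finset.subset_union_right (s₁ := P.support)),
    ← Finset.sum_add_distrib]
  exact Finset.sum_le_sum fun m _ => by rw [coeff_add]; exact abs_add_le _ _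

theorem l1Norm_monomial_le (m : σ →₀ ℕ) (c : ℝ) : l1Norm (monomial m c) ≤ |c| := by
  classical
  rw [l1Norm_eq_sum_of_support_subset support_monomial_subset]
  simp

theorem l1Norm_sum_monomial_le {ι : Type*} (s : Finset ι) (f : ι → σ →₀ ℕ) (c : ι → ℝ) :
    l1Norm (∑ k ∈ s, monomial (f k) (c k)) ≤ ∑ k ∈ s, |c k| :=
  (Finset.le_sum_of_subadditive l1Norm (by simp [l1Norm]) l1Norm_add_le s _).trans
    (Finset.sum_le_sum fun k _ => l1Norm_monomial_le _ _)

theorem l1Norm_C_mul_le (c : ℝ) (P : MvPolynomial σ ℝ) : l1Norm (C c * P) ≤ |c| * l1Norm P := by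
  conv_lhs => rw [P.as_sum, Finset.mul_sum]
  simp only [C_mul_monomial]
  refine (l1Norm_sum_monomial_le _ _ _).trans_eq ?_
  simp [l1Norm, Finset.mul_sum, abs_mul]

theorem l1Norm_X_mul_le (i : σ) (P : MvPolynomial σ ℝ) : l1Norm (X i * P) ≤ l1Norm P := by
  conv_lhs => rw [P.as_sum, Finset.mul_sum]
  have h : ∀ m, X i * monomial m (coeff m P) = monomial (Finsupp.single i 1 + m) (coeff m P) :=
    fun m => by rw [monomial_single_add, pow_one]
  simp only [h]
  exact l1Norm_sum_monomial_le _ _ _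

theorem l1Norm_pderiv_le {P : MvPolynomial σ ℝ} {n : ℕ} (hP : P.IsHomogeneous n) (i : σ) :
    l1Norm (pderiv i P) ≤ n * l1Norm P := by
  conv_lhs => rw [P.as_sum, map_sum]
  simp only [pderiv_monomial]
  refine (l1Norm_sum_monomial_le _ _ _).trans ?_
  rw [l1Norm, Finset.mul_sum]
  refine Finset.sum_le_sum fun m hm => ?_
  rw [abs_mul, Nat.abs_cast, mul_comm]
  gcongr
  have hdeg : Finsupp.degree m = n := by
    rw [Finsupp.degree_eq_weight_one]; exact hP (mem_support_iff.mp hm)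
  exact hdeg ▸ Finsupp.le_degree i m

end MvPolynomial

variable {σ : Type*} [Fintype σ]

theorem abs_eval_le_l1Norm_mul_norm_pow {P : MvPolynomial σ ℝ} {n : ℕ} (hP : P.IsHomogeneous n)
    (x : EuclideanSpace ℝ σ) : |eval x.ofLp P| ≤ l1Norm P * ‖x‖ ^ n := by
  rw [eval_eq', l1Norm, Finset.sum_mul]
  refine (Finset.abs_sum_le_sum_abs _ _).trans (Finset.sum_le_sum fun m hm => ?_)
  have hdeg : m.degree = n := by
    rw [Finsupp.degree_eq_weight_one]; exact hP (mem_support_iff.mp hm)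
  rw [abs_mul, Finset.abs_prod, ← hdeg, Finsupp.degree_eq_sum, ← Finset.prod_pow_eq_pow_sum]
  gcongr with j
  rw [abs_pow]
  gcongr
  exact PiLp.norm_apply_le x j

noncomputable def sumSq (σ : Type*) [Fintype σ] : MvPolynomial σ ℝ := ∑ i, X i ^ 2

theorem eval_sumSq (x : EuclideanSpace ℝ σ) : eval x.ofLp (sumSq σ) = ‖x‖ ^ 2 := by
  simp [sumSq, EuclideanSpace.norm_sq_eq]

theorem isHomogeneous_sumSq : (sumSq σ).IsHomogeneous 2 :=
  IsHomogeneous.sum _ _ _ fun i _ => isHomogeneous_X_pow i 2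

theorem l1Norm_sumSq_mul_le (P : MvPolynomial σ ℝ) :
    l1Norm (sumSq σ * P) ≤ Fintype.card σ * l1Norm P := by
  rw [sumSq, Finset.sum_mul]
  refine (Finset.le_sum_of_subadditive l1Norm (by simp [l1Norm]) l1Norm_add_le _ _).trans ?_
  rw [← nsmul_eq_mul, ← Finset.card_univ, ← Finset.sum_const]
  gcongr with i
  rw [sq, mul_assoc]
  exact (l1Norm_X_mul_le i _).trans (l1Norm_X_mul_le i P)

theorem isHomogeneous_sumSq_mul_pderiv {P : MvPolynomial σ ℝ} {n : ℕ} (hP : P.IsHomogeneous n)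
    (i : σ) : (sumSq σ * pderiv i P).IsHomogeneous (n + 1) := by
  cases n with
  | zero =>
    rw [← totalDegree_zero_iff_isHomogeneous, totalDegree_eq_zero_iff_eq_C] at hP
    rw [hP, pderiv_C, mul_zero]
    exact isHomogeneous_zero _ _ _
  | succ n => simpa [add_comm 2] using isHomogeneous_sumSq.mul (hP.pderiv (i := i))

theorem differentiable_eval (P : MvPolynomial σ ℝ) :
    Differentiable ℝ fun y : EuclideanSpace ℝ σ => eval y.ofLp P := fun x =>
  (AnalyticOnNhd.eval_mvPolynomial P x.ofLp trivial).differentiableAt.comp x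
    (EuclideanSpace.equiv σ ℝ).differentiableAt

theorem fderiv_eval_apply_single [DecidableEq σ] (P : MvPolynomial σ ℝ) (x : EuclideanSpace ℝ σ) (i : σ) :
    fderiv ℝ (fun y : EuclideanSpace ℝ σ => eval y.ofLp P) x (EuclideanSpace.single i 1) =
      eval x.ofLp (pderiv i P) := by
  induction P using MvPolynomial.induction_on with
  | C a => simp
  | add p q hp hq =>
    simp only [map_add]
    rw [fderiv_fun_add (differentiable_eval p x) (differentiable_eval q x)]
    simp [hp, hq]
  | mul_X p j hp =>
    simp only [map_mul, eval_X, pderiv_mul, pderiv_X]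
    rw [fderiv_fun_mul (differentiable_eval p x) (by fun_prop),
      show (fun y : EuclideanSpace ℝ σ => y.ofLp j) = EuclideanSpace.proj j from rfl,
      ContinuousLinearMap.fderiv]
    obtain rfl | hij := eq_or_ne i j <;> simp [*] <;> ring

theorem hasFDerivAt_norm_rpow_of_ne_zero {E : Type*} [NormedAddCommGroup E] [InnerProductSpace ℝ E]
    {x : E} (hx : x ≠ 0) (s : ℝ) :
    HasFDerivAt (fun y : E => ‖y‖ ^ s) ((s * ‖x‖ ^ (s - 2)) • innerSL ℝ x) x := by
  apply HasStrictFDerivAt.hasFDerivAt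
  convert (hasStrictFDerivAt_norm_sq x).rpow_const (p := s / 2) (by simp [hx]) using 0
  simp_rw [← Real.rpow_natCast_mul (norm_nonneg _), ← Nat.cast_smul_eq_nsmul ℝ, smul_smul]
  ring_nf

theorem fderiv_eval_mul_norm_rpow_apply_single [DecidableEq σ] (P : MvPolynomial σ ℝ) (s : ℝ)
    {x : EuclideanSpace ℝ σ} (hx : x ≠ 0) (i : σ) :
    fderiv ℝ (fun y : EuclideanSpace ℝ σ => eval y.ofLp P * ‖y‖ ^ s) x (EuclideanSpace.single i 1) =
      eval x.ofLp (sumSq σ * pderiv i P + C s * (X i * P)) * ‖x‖ ^ (s - 2) := by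
  rw [((differentiable_eval P x).hasFDerivAt.fun_mul (hasFDerivAt_norm_rpow_of_ne_zero hx s)).fderiv]
  have hsplit : ‖x‖ ^ s = ‖x‖ ^ 2 * ‖x‖ ^ (s - 2) := by
    rw [← Real.rpow_natCast, ← Real.rpow_add (norm_pos_iff.mpr hx)]
    ring_nf
  simp [fderiv_eval_apply_single, eval_sumSq, EuclideanSpace.inner_single_right, hsplit]
  ring

noncomputable def invNormDerivPoly : List σ → MvPolynomial σ ℝ
  | [] => 1
  | i :: L => sumSq σ * pderiv i (invNormDerivPoly L) +
      C (-(2 * L.length + 1 : ℝ)) * (X i * invNormDerivPoly L)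

theorem isHomogeneous_invNormDerivPoly (L : List σ) :
    (invNormDerivPoly L).IsHomogeneous L.length := by
  induction L with
  | nil => exact isHomogeneous_one _ _
  | cons i L ih =>
    refine (isHomogeneous_sumSq_mul_pderiv ih i).add ?_
    have h := ((isHomogeneous_X ℝ i).mul ih).C_mul (-(2 * L.length + 1 : ℝ))
    rwa [add_comm 1] at h

theorem l1Norm_invNormDerivPoly_cons_le (i : σ) (L : List σ) :
    l1Norm (invNormDerivPoly (i :: L)) ≤
      (Fintype.card σ + 2) * (L.length + 1) * l1Norm (invNormDerivPoly L) := by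
  set n := L.length
  set P := invNormDerivPoly L
  have hP : 0 ≤ l1Norm P := Finset.sum_nonneg fun _ _ => abs_nonneg _
  calc l1Norm (invNormDerivPoly (i :: L))
      ≤ l1Norm (sumSq σ * pderiv i P) + l1Norm (C (-(2 * n + 1 : ℝ)) * (X i * P)) :=
        l1Norm_add_le _ _
    _ ≤ Fintype.card σ * (n * l1Norm P) + |-(2 * n + 1 : ℝ)| * l1Norm P := by
        gcongr
        · exact (l1Norm_sumSq_mul_le _).trans
            (by gcongr; exact l1Norm_pderiv_le (isHomogeneous_invNormDerivPoly L) i)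
        · exact (l1Norm_C_mul_le _ _).trans (by gcongr; exact l1Norm_X_mul_le i P)
    _ ≤ (Fintype.card σ + 2) * (n + 1) * l1Norm P := by
        rw [abs_neg, abs_of_nonneg (by positivity)]
        nlinarith [mul_nonneg (Nat.cast_nonneg (α := ℝ) (Fintype.card σ)) hP]

theorem l1Norm_invNormDerivPoly_le (L : List σ) :
    l1Norm (invNormDerivPoly L) ≤ (Fintype.card σ + 2) ^ L.length * L.length.factorial := by
  induction L with
  | nil => simpa [invNormDerivPoly] using l1Norm_monomial_le (σ := σ) 0 1
  | cons i L ih =>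
    calc l1Norm (invNormDerivPoly (i :: L))
        ≤ (Fintype.card σ + 2) * (L.length + 1) * l1Norm (invNormDerivPoly L) :=
          l1Norm_invNormDerivPoly_cons_le i L
      _ ≤ (Fintype.card σ + 2) * (L.length + 1) *
            ((Fintype.card σ + 2) ^ L.length * L.length.factorial) := by gcongr
      _ = (Fintype.card σ + 2) ^ (i :: L).length * (i :: L).length.factorial := by
          rw [List.length_cons, pow_succ, Nat.factorial_succ]
          push_cast
          ring

theorem pderivList_one_div_norm_eq (L : List (Fin 3)) {x : EuclideanSpace ℝ (Fin 3)} (hx : x ≠ 0) :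
    pderivList L (fun y => 1 / ‖y‖) x =
      eval x.ofLp (invNormDerivPoly L) * ‖x‖ ^ (-(2 * L.length + 1 : ℝ)) := by
  induction L generalizing x with
  | nil => simp [pderivList, invNormDerivPoly, Real.rpow_neg_one]
  | cons i L ih =>
    have hL : pderivList L (fun y => 1 / ‖y‖) =ᶠ[nhds x]
        fun y => eval y.ofLp (invNormDerivPoly L) * ‖y‖ ^ (-(2 * L.length + 1 : ℝ)) :=
      Filter.eventually_of_mem (isOpen_compl_singleton.mem_nhds hx) fun y hy => ih hy
    simp only [pderivList]
    rw [hL.fderiv_eq, fderiv_eval_mul_norm_rpow_apply_single _ _ hx, invNormDerivPoly, List.length_cons]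
    push_cast
    ring_nf

/-- There exists `K > 0` such that for every multi-index `α ∈ ℕ³` and every `x ≠ 0`,
`|∂^α (1/|x|)| ≤ K^{|α|} |α|! / |x|^{1+|α|}`. -/
theorem deriv_inv_norm_bound :
    ∃ K : ℝ, 0 < K ∧ ∀ (α : Fin 3 → ℕ) (x : EuclideanSpace ℝ (Fin 3)), x ≠ 0 →
      |multiDeriv α (fun y => 1 / ‖y‖) x| ≤
        K ^ (∑ i, α i) * Nat.factorial (∑ i, α i) / ‖x‖ ^ (1 + ∑ i, α i) := by
  refine ⟨Fintype.card (Fin 3) + 2, by positivity, fun α x hx => ?_⟩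
  set L := (List.finRange 3).flatMap fun i => List.replicate (α i) i
  have hlen : L.length = ∑ i, α i := by simp [L, List.length_flatMap, Fin.sum_univ_def]
  set n := L.length
  have hpow : ‖x‖ ^ n * ‖x‖ ^ (-(2 * n + 1 : ℝ)) = (‖x‖ ^ (1 + n))⁻¹ := by
    rw [← Real.rpow_natCast, ← Real.rpow_natCast _ (1 + n), ← Real.rpow_neg (norm_nonneg x),
      ← Real.rpow_add (norm_pos_iff.mpr hx)]
    push_cast
    ring_nf
  rw [multiDeriv, pderivList_one_div_norm_eq L hx, abs_mul, Real.abs_rpow_of_nonneg (norm_nonneg x),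
    abs_norm, ← hlen, div_eq_mul_inv, ← hpow, ← mul_assoc]
  gcongr
  exact (abs_eval_le_l1Norm_mul_norm_pow (isHomogeneous_invNormDerivPoly L) x).trans
    (by gcongr; exact l1Norm_invNormDerivPoly_le L)
end

section
/- There exists a constant K > 0 such that for every multi-index α ∈ ℕ³, all indices i, j ∈ {1,2,3}, and every x ∈ ℝ³ \ {0}, one has |∂^α (x_i x_j / |x|³)| ≤ K^{|α|} |α|! / |x|^{1+|α|}. -/
/-!
Every derivative of order `n` of `x_i x_j / ‖x‖³` is, away from `0`, a finite combination
`∑ c_s x^{L_s} / ‖x‖^{|L_s| + 1 + n}` of coordinate monomials `x^L` with `|L_s| ≤ n + 2`.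
Since `∂_k (x^L / ‖x‖^p) = (count k L) x^{L ∖ k} / ‖x‖^p - p x_k x^L / ‖x‖^{p + 2}`, one more
derivative multiplies the total size `∑ |c_s|` of the coefficients by at most
`3n + 5 ≤ 5 (n + 1)`, and `|x^L| ≤ ‖x‖^{|L|}` bounds each term by `|c_s| / ‖x‖^{1 + n}`.
This gives the bound with `K = 5`.
-/

section
variable {F : Type*} [NormedAddCommGroup F] [InnerProductSpace ℝ F] {x : F}

theorem hasFDerivAt_norm_of_ne_zero (hx : x ≠ 0) :
    HasFDerivAt (‖·‖) (‖x‖⁻¹ • innerSL ℝ x) x := by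
  have hd : DifferentiableAt ℝ (‖·‖) x :=
    (contDiffAt_norm (n := 1) ℝ hx).differentiableAt one_ne_zero
  -- compare the two expressions for the derivative of `‖y‖ ^ 2`: `2 ⟪x, ·⟫` and the chain rule
  have key : fderiv ℝ (fun y : F => ‖y‖ ^ 2) x = (2 * ‖x‖) • fderiv ℝ (‖·‖) x := by
    rw [fderiv_fun_pow 2 hd]; simp
  rw [fderiv_norm_sq_apply] at key
  refine hd.hasFDerivAt.congr_fderiv (ContinuousLinearMap.ext fun v => ?_)
  have hv := congr($key v)
  have hx' : ‖x‖ ≠ 0 := norm_ne_zero_iff.mpr hx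
  simp only [smul_apply, innerSL_apply_apply, smul_eq_mul, nsmul_eq_mul, Nat.cast_ofNat]
    at hv ⊢
  field_simp
  linarith

theorem hasFDerivAt_inv_norm_pow (hx : x ≠ 0) (p : ℕ) :
    HasFDerivAt (fun y : F => (‖y‖ ^ p)⁻¹) ((-(p : ℝ) / ‖x‖ ^ (p + 2)) • innerSL ℝ x) x := by
  have hx' : ‖x‖ ≠ 0 := norm_ne_zero_iff.mpr hx
  refine ((hasDerivAt_inv (pow_ne_zero p hx')).comp_hasFDerivAt x
    ((hasFDerivAt_norm_of_ne_zero hx).pow p)).congr_fderiv ?_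
  rw [smul_smul, smul_smul, nsmul_eq_mul]
  congr 1
  rcases p with _ | p
  · simp
  · rw [Nat.add_sub_cancel]
    field_simp
    ring
end

section
variable {ι : Type*}

def coordMonomial (L : List ι) (x : EuclideanSpace ℝ ι) : ℝ := (L.map (x ·)).prod

@[simp] theorem coordMonomial_nil (x : EuclideanSpace ℝ ι) : coordMonomial [] x = 1 := rfl

@[simp] theorem coordMonomial_cons (a : ι) (L : List ι) (x : EuclideanSpace ℝ ι) :
    coordMonomial (a :: L) x = x a * coordMonomial L x := rfl

theorem count_mul_coordMonomial_erase [DecidableEq ι] (L : List ι) (k : ι)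
    (x : EuclideanSpace ℝ ι) :
    L.count k * (x k * coordMonomial (L.erase k) x) = L.count k * coordMonomial L x := by
  by_cases hk : k ∈ L
  · rw [← coordMonomial_cons, coordMonomial, coordMonomial,
      ((List.perm_cons_erase hk).map _).prod_eq]
  · simp [List.count_eq_zero_of_not_mem hk]

variable [Fintype ι]

theorem abs_coordMonomial_le (L : List ι) (x : EuclideanSpace ℝ ι) :
    |coordMonomial L x| ≤ ‖x‖ ^ L.length := by
  induction L with
  | nil => simp
  | cons a L ih =>
    rw [coordMonomial_cons, abs_mul, List.length_cons, pow_succ']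
    exact mul_le_mul (PiLp.norm_apply_le x a) ih (abs_nonneg _) (norm_nonneg _)

theorem differentiable_coordMonomial (L : List ι) : Differentiable ℝ (coordMonomial L) := by
  induction L with
  | nil => exact differentiable_const 1
  | cons a L ih => exact (EuclideanSpace.proj a).differentiable.mul ih

theorem fderiv_coordMonomial_single [DecidableEq ι] (L : List ι) (x : EuclideanSpace ℝ ι)
    (k : ι) :
    fderiv ℝ (coordMonomial L) x (EuclideanSpace.single k 1) =
      L.count k * coordMonomial (L.erase k) x := by
  induction L with
  | nil => simp [show coordMonomial (ι := ι) [] = fun _ => 1 from rfl]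
  | cons a L ih =>
    have h := ((EuclideanSpace.proj (𝕜 := ℝ) a).hasFDerivAt (x := x)).fun_mul
      (differentiable_coordMonomial L x).hasFDerivAt
    rw [show coordMonomial (a :: L) = fun y => EuclideanSpace.proj (𝕜 := ℝ) a y *
      coordMonomial L y from rfl, h.fderiv]
    simp only [add_apply, smul_apply, ih, smul_eq_mul]
    by_cases hak : a = k
    · subst hak
      simp only [PiLp.proj_apply, PiLp.single_eq_same, mul_one, List.count_cons_self,
        Nat.cast_add, Nat.cast_one, List.erase_cons_head]
      linear_combination count_mul_coordMonomial_erase L a x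
    · simp only [PiLp.proj_apply, ne_eq, hak, not_false_eq_true, PiLp.single_eq_of_ne, mul_zero,
        add_zero, List.count_cons_of_ne, beq_iff_eq, List.erase_cons_tail, coordMonomial_cons]
      ring

theorem differentiableAt_coordMonomial_div_norm_pow (L : List ι) (p : ℕ)
    {x : EuclideanSpace ℝ ι} (hx : x ≠ 0) :
    DifferentiableAt ℝ (fun y => coordMonomial L y / ‖y‖ ^ p) x := by
  simp only [div_eq_mul_inv]
  exact (differentiable_coordMonomial L x).mul (hasFDerivAt_inv_norm_pow hx p).differentiableAt

theorem fderiv_coordMonomial_div_norm_pow_single [DecidableEq ι] (L : List ι) (p : ℕ)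
    {x : EuclideanSpace ℝ ι} (hx : x ≠ 0) (k : ι) :
    fderiv ℝ (fun y => coordMonomial L y / ‖y‖ ^ p) x (EuclideanSpace.single k 1) =
      L.count k * coordMonomial (L.erase k) x / ‖x‖ ^ p -
        p * coordMonomial (k :: L) x / ‖x‖ ^ (p + 2) := by
  simp only [div_eq_mul_inv _ (‖_‖ ^ _)]
  rw [((differentiable_coordMonomial L x).hasFDerivAt.fun_mul
    (hasFDerivAt_inv_norm_pow hx p)).fderiv]
  simp [fderiv_coordMonomial_single, EuclideanSpace.inner_single_right]
  ring

theorem fderiv_coordMonomial_div_norm_pow_length_add_single [DecidableEq ι] (L : List ι)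
    (n : ℕ) {x : EuclideanSpace ℝ ι} (hx : x ≠ 0) (k : ι) :
    fderiv ℝ (fun y => coordMonomial L y / ‖y‖ ^ (L.length + 1 + n)) x
        (EuclideanSpace.single k 1) =
      L.count k * (coordMonomial (L.erase k) x / ‖x‖ ^ ((L.erase k).length + 1 + (n + 1))) -
        (L.length + 1 + n) *
          (coordMonomial (k :: L) x / ‖x‖ ^ ((k :: L).length + 1 + (n + 1))) := by
  -- when `k ∉ L` both sides vanish, so the exponent is irrelevant there
  have herase : (L.count k : ℝ) * (coordMonomial (L.erase k) x / ‖x‖ ^ (L.length + 1 + n)) =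
      L.count k * (coordMonomial (L.erase k) x / ‖x‖ ^ ((L.erase k).length + 1 + (n + 1))) := by
    by_cases hk : k ∈ L
    · rw [List.length_erase_of_mem hk, Nat.sub_add_cancel (List.length_pos_of_mem hk)]
      ring_nf
    · simp [List.count_eq_zero_of_not_mem hk]
  rw [fderiv_coordMonomial_div_norm_pow_single _ _ hx, ← herase, List.length_cons,
    show L.length + 1 + 1 + (n + 1) = L.length + 1 + n + 2 by ring]
  push_cast
  ring

theorem abs_coordMonomial_div_norm_pow_le (L : List ι) (m : ℕ) {x : EuclideanSpace ℝ ι}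
    (hx : x ≠ 0) : |coordMonomial L x / ‖x‖ ^ (L.length + m)| ≤ 1 / ‖x‖ ^ m := by
  have hx' : 0 < ‖x‖ := norm_pos_iff.mpr hx
  rw [abs_div, abs_of_pos (pow_pos hx' _), pow_add, ← div_div,
    div_le_div_iff_of_pos_right (pow_pos hx' m), div_le_one (pow_pos hx' _)]
  exact abs_coordMonomial_le L x

def HasMonomialExpansion (n : ℕ) (W : ℝ) (f : EuclideanSpace ℝ ι → ℝ) : Prop :=
  ∃ (σ : Type) (_ : Fintype σ) (c : σ → ℝ) (L : σ → List ι),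
    (∀ s, (L s).length ≤ n + 2) ∧ ∑ s, |c s| ≤ W ∧
      ∀ x ≠ 0, f x = ∑ s, c s * (coordMonomial (L s) x / ‖x‖ ^ ((L s).length + 1 + n))

namespace HasMonomialExpansion

variable {n : ℕ} {W : ℝ} {f : EuclideanSpace ℝ ι → ℝ}

theorem abs_le (hf : HasMonomialExpansion n W f) {x : EuclideanSpace ℝ ι} (hx : x ≠ 0) :
    |f x| ≤ W / ‖x‖ ^ (1 + n) := by
  obtain ⟨σ, _, c, L, -, hW, hf⟩ := hf
  have hterm (s : σ) :
      |c s * (coordMonomial (L s) x / ‖x‖ ^ ((L s).length + 1 + n))| ≤ |c s| / ‖x‖ ^ (1 + n) := by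
    rw [abs_mul, add_assoc, div_eq_mul_one_div |c s|]
    exact mul_le_mul_of_nonneg_left (abs_coordMonomial_div_norm_pow_le _ _ hx) (abs_nonneg _)
  calc |f x| ≤ ∑ s, |c s| / ‖x‖ ^ (1 + n) := by
        rw [hf x hx]
        exact (Finset.abs_sum_le_sum_abs _ _).trans (Finset.sum_le_sum fun s _ => hterm s)
    _ = (∑ s, |c s|) / ‖x‖ ^ (1 + n) := (Finset.sum_div ..).symm
    _ ≤ W / ‖x‖ ^ (1 + n) := by gcongr

theorem fderiv_single [DecidableEq ι] (hf : HasMonomialExpansion n W f) (k : ι) :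
    HasMonomialExpansion (n + 1) (5 * (n + 1) * W)
      (fun x => fderiv ℝ f x (EuclideanSpace.single k 1)) := by
  obtain ⟨σ, _, c, L, hL, hW, hf⟩ := hf
  refine ⟨σ ⊕ σ, inferInstance,
    Sum.elim (fun s => c s * (L s).count k) (fun s => -(c s * ((L s).length + 1 + n))),
    Sum.elim (fun s => (L s).erase k) (fun s => k :: L s), ?_, ?_, ?_⟩
  · rintro (s | s)
    · exact List.length_erase_le.trans ((hL s).trans (by omega))
    · simpa using hL s
  · have hcoeff (s : σ) :
        |c s * (L s).count k| + |-(c s * ((L s).length + 1 + n))| ≤ 5 * (n + 1) * |c s| := by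
      have hlen : ((L s).length : ℝ) ≤ n + 2 := by exact_mod_cast hL s
      have hcount : ((L s).count k : ℝ) ≤ n + 2 := by
        exact_mod_cast List.count_le_length.trans (hL s)
      rw [abs_neg, abs_mul, abs_mul, Nat.abs_cast,
        abs_of_nonneg (by positivity : (0 : ℝ) ≤ (L s).length + 1 + n)]
      nlinarith [abs_nonneg (c s)]
    calc ∑ t, |Sum.elim (fun s => c s * (L s).count k)
            (fun s => -(c s * ((L s).length + 1 + n))) t|
        ≤ ∑ s, 5 * (n + 1) * |c s| := by
          rw [Fintype.sum_sum_type, ← Finset.sum_add_distrib]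
          exact Finset.sum_le_sum fun s _ => hcoeff s
      _ = 5 * (n + 1) * ∑ s, |c s| := (Finset.mul_sum ..).symm
      _ ≤ 5 * (n + 1) * W := by gcongr
  · intro x hx
    have hterm (s : σ) : DifferentiableAt ℝ
        (fun y => coordMonomial (L s) y / ‖y‖ ^ ((L s).length + 1 + n)) x :=
      differentiableAt_coordMonomial_div_norm_pow _ _ hx
    have hloc : f =ᶠ[nhds x] fun y =>
        ∑ s, c s * (coordMonomial (L s) y / ‖y‖ ^ ((L s).length + 1 + n)) :=
      Filter.eventuallyEq_of_mem (isOpen_ne.mem_nhds hx) hf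
    rw [Fintype.sum_sum_type, ← Finset.sum_add_distrib]
    change fderiv ℝ f x _ = _
    rw [hloc.fderiv_eq, fderiv_fun_sum fun s _ => (hterm s).const_mul (c s), sum_apply]
    refine Finset.sum_congr rfl fun s _ => ?_
    rw [fderiv_const_mul (hterm s), smul_apply, smul_eq_mul,
      fderiv_coordMonomial_div_norm_pow_length_add_single _ _ hx]
    simp only [Sum.elim_inl, Sum.elim_inr]
    ring

end HasMonomialExpansion

theorem hasMonomialExpansion_mul_div_norm_pow_three (i j : ι) :
    HasMonomialExpansion 0 1 (fun y : EuclideanSpace ℝ ι => y i * y j / ‖y‖ ^ 3) :=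
  ⟨Unit, inferInstance, fun _ => 1, fun _ => [i, j], fun _ => le_rfl, by simp,
    fun x _ => by simp [mul_div_assoc]⟩
end

theorem hasMonomialExpansion_pderivList {W : ℝ} {f : EuclideanSpace ℝ (Fin 3) → ℝ}
    (hf : HasMonomialExpansion 0 W f) (Ls : List (Fin 3)) :
    HasMonomialExpansion Ls.length (5 ^ Ls.length * Ls.length.factorial * W)
      (pderivList Ls f) := by
  induction Ls with
  | nil => simpa [pderivList] using hf
  | cons k Ls ih =>
    have hW : (5 : ℝ) ^ (Ls.length + 1) * (Ls.length + 1).factorial * W =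
        5 * (Ls.length + 1) * (5 ^ Ls.length * Ls.length.factorial * W) := by
      push_cast [Nat.factorial_succ, pow_succ]
      ring
    rw [List.length_cons, hW]
    exact ih.fderiv_single k

theorem length_flatMap_finRange_replicate {m : ℕ} (α : Fin m → ℕ) :
    ((List.finRange m).flatMap fun i => List.replicate (α i) i).length = ∑ k, α k := by
  simp [List.length_flatMap, Fin.sum_univ_def]

/-- There exists `K > 0` such that for every multi-index `α ∈ ℕ³`, all `i, j` and every
`x ≠ 0`, `|∂^α (x_i x_j / |x|³)| ≤ K^{|α|} |α|! / |x|^{1+|α|}`. -/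
theorem deriv_xixj_inv_norm_cubed_bound :
    ∃ K : ℝ, 0 < K ∧ ∀ (α : Fin 3 → ℕ) (i j : Fin 3) (x : EuclideanSpace ℝ (Fin 3)), x ≠ 0 →
      |multiDeriv α (fun y => y i * y j / ‖y‖ ^ 3) x| ≤
        K ^ (∑ k, α k) * Nat.factorial (∑ k, α k) / ‖x‖ ^ (1 + ∑ k, α k) := by
  refine ⟨5, by norm_num, fun α i j x hx => ?_⟩
  have h := (hasMonomialExpansion_pderivList (hasMonomialExpansion_mul_div_norm_pow_three i j)
    ((List.finRange 3).flatMap fun i => List.replicate (α i) i)).abs_le hx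
  rw [length_flatMap_finRange_replicate, mul_one] at h
  exact h
end

section
/- Let a > 0, η : [0,a] → [0,∞) a continuous non-decreasing function with η(0) = 0 and ∫₀^a dz/η(z) = ∞ (an Osgood modulus). Let f : [t₀,T] → [0,a] be measurable, v : [t₀,T] → [0,∞) locally integrable, and suppose f(t) ≤ ∫_{t₀}^t v(s) η(f(s)) ds for a.e. t. Then f = 0 a.e. on [t₀,T]. -/
/-!
Let `F t = ∫_{t₀}^t v η(f)` and `G t = ∫_{t₀}^t v`. Then `f ≤ F` a.e., `F` is continuous and
non-decreasing with `F t₀ = 0`, and since `η` is monotone the hypothesis upgrades to the increment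
inequality `F d - F c ≤ η(F d) (G d - G c)` for `c ≤ d`. If `F` became positive, say `F T ≥ b > 0`,
then for every `ε ∈ (0, b]` we could cut `[ε, b]` into pieces `[x, y]` so short that
`η y ≤ 2 η x`, find times `σ ≤ τ` with `F σ = x`, `F τ = y`, and get
`∫_x^y dz/η ≤ (y - x)/η x ≤ 2 (G τ - G σ)`. Summing, `∫_ε^b dz/η ≤ 2 (G T - G t₀)` uniformly
in `ε`, contradicting the Osgood condition. Hence `F ≡ 0` and so `f = 0` a.e.
-/

open MeasureTheory Set Filter Topology

theorem MonotoneOn.inv₀ {η : ℝ → ℝ} {s : Set ℝ} (hηm : MonotoneOn η s)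
    (hpos : ∀ z ∈ s, 0 < η z) : AntitoneOn (fun z => (η z)⁻¹) s :=
  fun _ hx _ hy hxy => inv_anti₀ (hpos _ hx) (hηm hx hy hxy)

theorem integral_inv_le_two_mul {η : ℝ → ℝ} {x y g : ℝ} (hxy : x ≤ y)
    (hηm : MonotoneOn η (Icc x y)) (hx : 0 < η x) (hy : η y ≤ 2 * η x)
    (h : y - x ≤ η y * g) : ∫ z in x..y, (η z)⁻¹ ≤ 2 * g := by
  have hpos : ∀ z ∈ Icc x y, 0 < η z := fun z hz => hx.trans_le (hηm ⟨le_rfl, hxy⟩ hz hz.1)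
  have hg : 0 ≤ g := nonneg_of_mul_nonneg_right (by linarith) (hpos y ⟨hxy, le_rfl⟩)
  calc ∫ z in x..y, (η z)⁻¹
      ≤ ∫ _ in x..y, (η x)⁻¹ :=
        intervalIntegral.integral_mono_on hxy
          (AntitoneOn.intervalIntegrable (by rw [uIcc_of_le hxy]; exact hηm.inv₀ hpos))
          intervalIntegrable_const fun z hz => inv_anti₀ hx (hηm ⟨le_rfl, hxy⟩ hz hz.1)
    _ = (y - x) * (η x)⁻¹ := by simp
    _ ≤ η y * g * (η x)⁻¹ := by gcongr
    _ ≤ 2 * η x * g * (η x)⁻¹ := by gcongr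
    _ = 2 * g := by field_simp

theorem rel_of_forall_sub_le_of_trans {R : ℝ → ℝ → Prop} {ε b δ : ℝ} (hδ : 0 < δ)
    (hloc : ∀ x y, ε ≤ x → x ≤ y → y ≤ b → y - x ≤ δ → R x y)
    (htrans : ∀ x y z, ε ≤ x → x ≤ y → y ≤ z → z ≤ b → R x y → R y z → R x z)
    {x y : ℝ} (hx : ε ≤ x) (hxy : x ≤ y) (hy : y ≤ b) : R x y := by
  have key : ∀ n : ℕ, ∀ x y, ε ≤ x → x ≤ y → y ≤ b → y - x ≤ n * δ → R x y := by
    intro n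
    induction n with
    | zero => exact fun x y hx hxy hy h => hloc x y hx hxy hy (by simp at h; linarith)
    | succ n ih =>
      intro x y hx hxy hy h
      rcases le_total (y - x) δ with hclose | hfar
      · exact hloc x y hx hxy hy hclose
      · exact htrans x (x + δ) y hx (by linarith) (by linarith) hy
          (hloc x (x + δ) hx (by linarith) (by linarith) (by linarith))
          (ih (x + δ) y (by linarith) (by linarith) hy (by push_cast at h; linarith))
  obtain ⟨n, hn⟩ := exists_nat_ge ((y - x) / δ)
  exact key n x y hx hxy hy ((div_le_iff₀ hδ).1 hn)

theorem integral_inv_le_of_sub_le_mul_sub {η F G : ℝ → ℝ} {t₀ T ε b : ℝ}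
    (hηc : ContinuousOn η (Icc ε b)) (hηm : MonotoneOn η (Icc ε b)) (hε : 0 < η ε)
    (hFc : ContinuousOn F (Icc t₀ T))
    (hinc : ∀ c ∈ Icc t₀ T, ∀ d ∈ Icc t₀ T, c ≤ d → F d ≤ b →
      F d - F c ≤ η (F d) * (G d - G c))
    {σ τ : ℝ} (hσ : σ ∈ Icc t₀ T) (hτ : τ ∈ Icc t₀ T) (hστ : σ ≤ τ)
    (hεσ : ε ≤ F σ) (hFστ : F σ ≤ F τ) (hτb : F τ ≤ b) :
    ∫ z in F σ..F τ, (η z)⁻¹ ≤ 2 * (G τ - G σ) := by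
  have hηε : ∀ z ∈ Icc ε b, η ε ≤ η z := fun z hz => hηm ⟨le_rfl, hz.1.trans hz.2⟩ hz hz.1
  have hint : ∀ x y, ε ≤ x → x ≤ y → y ≤ b →
      IntervalIntegrable (fun z => (η z)⁻¹) volume x y := fun x y hx hxy hy =>
    AntitoneOn.intervalIntegrable <| by
      rw [uIcc_of_le hxy]
      exact (hηm.inv₀ fun z hz => hε.trans_le (hηε z hz)).mono (Icc_subset_Icc hx hy)
  -- Tolerance `η ε ≤ η x`: on pieces shorter than `δ`, `η` at most doubles.
  obtain ⟨δ, hδ, hηδ⟩ := Metric.uniformContinuousOn_iff_le.1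
    (isCompact_Icc.uniformContinuousOn_of_continuous hηc) (η ε) hε
  let R (x y : ℝ) : Prop := ∀ σ ∈ Icc t₀ T, ∀ τ ∈ Icc t₀ T, σ ≤ τ → F σ = x → F τ = y →
    ∫ z in x..y, (η z)⁻¹ ≤ 2 * (G τ - G σ)
  suffices R (F σ) (F τ) from this σ hσ τ hτ hστ rfl rfl
  refine rel_of_forall_sub_le_of_trans hδ ?_ ?_ hεσ hFστ hτb
  · rintro x y hx hxy hy hyx σ hσ τ hτ hστ rfl rfl
    have hxI : F σ ∈ Icc ε b := ⟨hx, hxy.trans hy⟩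
    have hyI : F τ ∈ Icc ε b := ⟨hx.trans hxy, hy⟩
    have hdist := hηδ _ hxI _ hyI <| by
      rwa [Real.dist_eq, abs_sub_comm, abs_of_nonneg (by linarith)]
    rw [Real.dist_eq, abs_le] at hdist
    exact integral_inv_le_two_mul hxy (hηm.mono (Icc_subset_Icc hx hy))
      (hε.trans_le (hηε _ hxI)) (by linarith [hηε _ hxI]) (hinc σ hσ τ hτ hστ hy)
  · intro x y z hx hxy hyz hz hRxy hRyz σ hσ τ hτ hστ hFσ hFτ
    obtain ⟨ρ, hρ, hFρ⟩ := intermediate_value_Icc hστ (hFc.mono (Icc_subset_Icc hσ.1 hτ.2))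
      ⟨hFσ ▸ hxy, hFτ ▸ hyz⟩
    have hρ' : ρ ∈ Icc t₀ T := ⟨hσ.1.trans hρ.1, hρ.2.trans hτ.2⟩
    rw [← intervalIntegral.integral_add_adjacent_intervals (hint x y hx hxy (hyz.trans hz))
      (hint y z (hx.trans hxy) hyz hz)]
    linarith [hRxy σ hσ ρ hρ' hρ.1 hFσ hFρ, hRyz ρ hρ' τ hτ hρ.2 hFρ hFτ]

theorem AntitoneOn.integrableOn_Ioc_zero {g : ℝ → ℝ} {a b C : ℝ}
    (hg : AntitoneOn g (Ioc 0 a)) (hg0 : ∀ z ∈ Ioc 0 a, 0 ≤ g z) (hb : 0 < b) (hba : b ≤ a)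
    (hC : ∀ ε ∈ Ioc 0 b, ∫ z in ε..b, g z ≤ C) : IntegrableOn g (Ioc 0 a) := by
  have hIoc : ∀ p q, 0 < p → q ≤ a → IntegrableOn g (Ioc p q) := fun p q hp hq =>
    ((hg.mono fun z hz => ⟨hp.trans_le hz.1, hz.2.trans hq⟩).integrableOn_isCompact
      isCompact_Icc).mono_set Ioc_subset_Icc_self
  have hpos : ∀ n : ℕ, b / (n + 1) ∈ Ioc 0 b := fun n =>
    ⟨by positivity, div_le_self hb.le (by simp)⟩
  rw [← Ioc_union_Ioc_eq_Ioc hb.le hba]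
  refine IntegrableOn.union ?_ (hIoc b a hb le_rfl)
  refine integrableOn_Ioc_of_intervalIntegral_norm_bounded_left (l := atTop) (I := C)
    (a := fun n : ℕ => b / (n + 1)) (fun n => hIoc _ b (hpos n).1 hba) ?_
    (Eventually.of_forall fun n => ?_)
  · simpa [Function.comp_def] using
      (tendsto_const_div_atTop_nhds_zero_nat b).comp (tendsto_add_atTop_nat 1)
  · rw [← intervalIntegral.integral_of_le (hpos n).2]
    refine (intervalIntegral.integral_congr fun z hz => ?_).trans_le (hC _ (hpos n))
    rw [uIcc_of_le (hpos n).2] at hz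
    exact Real.norm_of_nonneg (hg0 z ⟨(hpos n).1.trans_le hz.1, hz.2.trans hba⟩)

theorem pos_of_sub_le_mul_sub {η F G : ℝ → ℝ} {t₀ T b : ℝ} (htT : t₀ ≤ T)
    (hFc : ContinuousOn F (Icc t₀ T)) (hF0 : F t₀ = 0) (hGm : MonotoneOn G (Icc t₀ T))
    (hinc : ∀ c ∈ Icc t₀ T, ∀ d ∈ Icc t₀ T, c ≤ d → F d ≤ b →
      F d - F c ≤ η (F d) * (G d - G c))
    (hbT : b ≤ F T) {z : ℝ} (hz : z ∈ Ioc 0 b) : 0 < η z := by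
  have h₀ : t₀ ∈ Icc t₀ T := left_mem_Icc.2 htT
  obtain ⟨d, hd, rfl⟩ : z ∈ F '' Icc t₀ T :=
    intermediate_value_Icc htT hFc (by rw [hF0]; exact ⟨hz.1.le, hz.2.trans hbT⟩)
  have hFd := hinc t₀ h₀ d hd hd.1 hz.2
  rw [hF0, sub_zero] at hFd
  by_contra! hη
  nlinarith [hGm h₀ hd hd.1, hz.1]

theorem le_zero_of_sub_le_mul_sub {η F G : ℝ → ℝ} {a t₀ T : ℝ} (ha : 0 < a) (htT : t₀ ≤ T)
    (hηc : ContinuousOn η (Icc 0 a)) (hηm : MonotoneOn η (Icc 0 a))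
    (hOsgood : ∫⁻ z in Ioc 0 a, ENNReal.ofReal (1 / η z) = ⊤)
    (hFc : ContinuousOn F (Icc t₀ T)) (hF0 : F t₀ = 0) (hGm : MonotoneOn G (Icc t₀ T))
    (hinc : ∀ c ∈ Icc t₀ T, ∀ d ∈ Icc t₀ T, c ≤ d → F d ≤ a →
      F d - F c ≤ η (F d) * (G d - G c)) :
    F T ≤ 0 := by
  by_contra! hT
  set b := min (F T) a
  have hb : 0 < b := lt_min hT ha
  have hba : b ≤ a := min_le_right _ _
  have hbT : b ≤ F T := min_le_left _ _
  have hincb : ∀ c ∈ Icc t₀ T, ∀ d ∈ Icc t₀ T, c ≤ d → F d ≤ b →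
      F d - F c ≤ η (F d) * (G d - G c) := fun c hc d hd hcd hdb =>
    hinc c hc d hd hcd (hdb.trans hba)
  have hpos : ∀ z ∈ Ioc 0 a, 0 < η z := fun z hz =>
    (pos_of_sub_le_mul_sub htT hFc hF0 hGm hincb hbT ⟨lt_min hz.1 hb, min_le_right _ _⟩).trans_le
      (hηm ⟨(lt_min hz.1 hb).le, (min_le_right _ _).trans hba⟩ (Ioc_subset_Icc_self hz)
        (min_le_left _ _))
  have hbound : ∀ ε ∈ Ioc 0 b, ∫ z in ε..b, (η z)⁻¹ ≤ 2 * (G T - G t₀) := by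
    intro ε hε
    obtain ⟨σ, hσ, hFσ⟩ := intermediate_value_Icc htT hFc
      (by rw [hF0]; exact ⟨hε.1.le, hε.2.trans hbT⟩ : ε ∈ Icc (F t₀) (F T))
    obtain ⟨τ, hτ, hFτ⟩ := intermediate_value_Icc hσ.2 (hFc.mono (Icc_subset_Icc hσ.1 le_rfl))
      ⟨hFσ ▸ hε.2, hbT⟩
    have hτ' : τ ∈ Icc t₀ T := ⟨hσ.1.trans hτ.1, hτ.2⟩
    have hIcc : Icc ε b ⊆ Icc 0 a := Icc_subset_Icc hε.1.le hba
    have hστ := integral_inv_le_of_sub_le_mul_sub (hηc.mono hIcc) (hηm.mono hIcc)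
      (hpos ε ⟨hε.1, hε.2.trans hba⟩) hFc hincb hσ hτ' hτ.1 hFσ.ge
      (by rw [hFσ, hFτ]; exact hε.2) hFτ.le
    rw [hFσ, hFτ] at hστ
    linarith [hGm (left_mem_Icc.2 htT) hσ hσ.1, hGm hτ' (right_mem_Icc.2 htT) hτ.2]
  have hint : IntegrableOn (fun z => (η z)⁻¹) (Ioc 0 a) :=
    ((hηm.mono Ioc_subset_Icc_self).inv₀ hpos).integrableOn_Ioc_zero
      (fun z hz => (inv_pos.2 (hpos z hz)).le) hb hba hbound
  simp only [one_div] at hOsgood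
  exact hint.lintegral_lt_top.ne hOsgood

theorem ContinuousOn.aestronglyMeasurable_comp_of_mapsTo_Icc {α : Type*} [MeasurableSpace α]
    {μ : Measure α} {s : Set α} {g : ℝ → ℝ} {f : α → ℝ} {p q : ℝ} (hpq : p ≤ q)
    (hg : ContinuousOn g (Icc p q)) (hf : Measurable f) (hs : MeasurableSet s)
    (hfs : MapsTo f s (Icc p q)) :
    AEStronglyMeasurable (fun x => g (f x)) (μ.restrict s) := by
  have hgp : Continuous fun z => g (projIcc p q hpq z) :=
    hg.comp_continuous (continuous_subtype_val.comp continuous_projIcc) fun z =>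
      (projIcc p q hpq z).2
  refine (hgp.comp_aestronglyMeasurable hf.aestronglyMeasurable).congr ?_
  filter_upwards [ae_restrict_mem hs] with x hx
  simp [projIcc_of_mem hpq (hfs hx)]

theorem monotoneOn_primitive {w : ℝ → ℝ} {t₀ T : ℝ} (hw : IntegrableOn w (Icc t₀ T))
    (hw0 : ∀ s ∈ Icc t₀ T, 0 ≤ w s) :
    MonotoneOn (fun t => ∫ s in t₀..t, w s) (Icc t₀ T) := fun _ hc _ hd hcd =>
  intervalIntegral.integral_mono_interval le_rfl hc.1 hcd
    (ae_restrict_of_forall_mem measurableSet_Ioc fun s hs => hw0 s ⟨hs.1.le, hs.2.trans hd.2⟩)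
    (hw.mono_set (uIcc_subset_Icc (left_mem_Icc.2 (hc.1.trans hc.2)) hd)).intervalIntegrable

theorem integral_mul_le_of_ae_le {v φ : ℝ → ℝ} {c d M : ℝ} (hcd : c ≤ d)
    (hv : IntervalIntegrable v volume c d)
    (hvφ : IntervalIntegrable (fun s => v s * φ s) volume c d)
    (hv0 : ∀ s ∈ Icc c d, 0 ≤ v s) (hφ : ∀ᵐ s ∂volume.restrict (Icc c d), φ s ≤ M) :
    ∫ s in c..d, v s * φ s ≤ M * ∫ s in c..d, v s := by
  rw [← intervalIntegral.integral_const_mul]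
  refine intervalIntegral.integral_mono_ae_restrict hcd hvφ (hv.const_mul M) ?_
  filter_upwards [hφ, ae_restrict_mem measurableSet_Icc] with s hs hsI
  rw [mul_comm M]
  exact mul_le_mul_of_nonneg_left hs (hv0 s hsI)

theorem primitive_sub_le_mul_sub {η f v : ℝ → ℝ} {a t₀ T : ℝ}
    (hηm : MonotoneOn η (Icc 0 a)) (hfmem : MapsTo f (Icc t₀ T) (Icc 0 a))
    (hvnn : ∀ s ∈ Icc t₀ T, 0 ≤ v s) (hvint : IntegrableOn v (Icc t₀ T))
    (hwint : IntegrableOn (fun s => v s * η (f s)) (Icc t₀ T))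
    (hFm : MonotoneOn (fun t => ∫ s in t₀..t, v s * η (f s)) (Icc t₀ T))
    (hfF : ∀ᵐ t ∂volume.restrict (Icc t₀ T), f t ≤ ∫ s in t₀..t, v s * η (f s))
    {c d : ℝ} (hc : c ∈ Icc t₀ T) (hd : d ∈ Icc t₀ T) (hcd : c ≤ d)
    (hda : ∫ s in t₀..d, v s * η (f s) ≤ a) :
    (∫ s in t₀..d, v s * η (f s)) - (∫ s in t₀..c, v s * η (f s)) ≤
      η (∫ s in t₀..d, v s * η (f s)) * ((∫ s in t₀..d, v s) - ∫ s in t₀..c, v s) := by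
  have hint : ∀ {g : ℝ → ℝ}, IntegrableOn g (Icc t₀ T) → ∀ {p q}, p ∈ Icc t₀ T → q ∈ Icc t₀ T →
      IntervalIntegrable g volume p q := fun hg _ _ hp hq =>
    (hg.mono_set (uIcc_subset_Icc hp hq)).intervalIntegrable
  have h₀ : t₀ ∈ Icc t₀ T := left_mem_Icc.2 (hc.1.trans hc.2)
  have hsub : Icc c d ⊆ Icc t₀ T := Icc_subset_Icc hc.1 hd.2
  rw [intervalIntegral.integral_interval_sub_left (hint hwint h₀ hd) (hint hwint h₀ hc),
    intervalIntegral.integral_interval_sub_left (hint hvint h₀ hd) (hint hvint h₀ hc)]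
  refine integral_mul_le_of_ae_le hcd (hint hvint hc hd) (hint hwint hc hd)
    (fun s hs => hvnn s (hsub hs)) ?_
  filter_upwards [ae_restrict_of_ae_restrict_of_subset hsub hfF,
    ae_restrict_mem measurableSet_Icc] with s hfs hs
  have hfsd := hfs.trans (hFm (hsub hs) hd hs.2)
  exact hηm (hfmem (hsub hs)) ⟨(hfmem (hsub hs)).1.trans hfsd, hda⟩ hfsd

theorem osgood_zero_general (a t₀ T : ℝ) (ha : 0 < a)
    (η : ℝ → ℝ) (hηc : ContinuousOn η (Set.Icc 0 a)) (hηm : MonotoneOn η (Set.Icc 0 a))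
    (hηnn : ∀ z ∈ Set.Icc (0 : ℝ) a, 0 ≤ η z)
    (hOsgood : (∫⁻ z in Set.Ioc (0 : ℝ) a, ENNReal.ofReal (1 / η z)) = ⊤)
    (f : ℝ → ℝ) (hf : Measurable f) (hfmem : ∀ t ∈ Set.Icc t₀ T, f t ∈ Set.Icc 0 a)
    (v : ℝ → ℝ) (hvnn : ∀ s ∈ Set.Icc t₀ T, 0 ≤ v s)
    (hvint : IntegrableOn v (Set.Icc t₀ T))
    (hineq : ∀ᵐ t ∂(volume.restrict (Set.Icc t₀ T)),
      f t ≤ ∫ s in Set.Icc t₀ t, v s * η (f s)) :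
    ∀ᵐ t ∂(volume.restrict (Set.Icc t₀ T)), f t = 0 := by
  have hηf : ∀ s ∈ Icc t₀ T, η (f s) ∈ Icc 0 (η a) := fun s hs =>
    ⟨hηnn _ (hfmem s hs), hηm (hfmem s hs) ⟨ha.le, le_rfl⟩ (hfmem s hs).2⟩
  have hwint : IntegrableOn (fun s => v s * η (f s)) (Icc t₀ T) :=
    hvint.mul_bdd (hηc.aestronglyMeasurable_comp_of_mapsTo_Icc ha.le hf measurableSet_Icc hfmem)
      (ae_restrict_of_forall_mem measurableSet_Icc fun s hs => by
        rw [Real.norm_of_nonneg (hηf s hs).1]; exact (hηf s hs).2)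
  have hFm := monotoneOn_primitive hwint fun s hs => mul_nonneg (hvnn s hs) (hηf s hs).1
  have hfF : ∀ᵐ t ∂volume.restrict (Icc t₀ T), f t ≤ ∫ s in t₀..t, v s * η (f s) := by
    filter_upwards [hineq, ae_restrict_mem measurableSet_Icc] with t h ht
    rwa [integral_Icc_eq_integral_Ioc, ← intervalIntegral.integral_of_le ht.1] at h
  filter_upwards [hfF, ae_restrict_mem measurableSet_Icc] with t hft ht
  have hT : t₀ ≤ T := ht.1.trans ht.2
  have hFc := intervalIntegral.continuousOn_primitive_interval (uIcc_of_le hT ▸ hwint)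
  rw [uIcc_of_le hT] at hFc
  have hFT := le_zero_of_sub_le_mul_sub ha hT hηc hηm hOsgood hFc intervalIntegral.integral_same
    (monotoneOn_primitive hvint hvnn) fun c hc d hd hcd hda =>
      primitive_sub_le_mul_sub hηm hfmem hvnn hvint hwint hFm hfF hc hd hcd hda
  linarith [hFm ht (right_mem_Icc.2 hT) ht.2, (hfmem t ht).1]

/-- Osgood's lemma, case `c = 0`: if `η` is a continuous non-decreasing Osgood modulus
(`η(0) = 0`, `∫₀^a dz/η(z) = ∞`) and `f : [t₀,T] → [0,a]` is measurable with
`f(t) ≤ ∫_{t₀}^t v(s) η(f(s)) ds` for a.e. `t`, then `f = 0` a.e. on `[t₀,T]`. -/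
theorem osgood_zero (a t₀ T : ℝ) (ha : 0 < a) (htT : t₀ ≤ T)
    (η : ℝ → ℝ) (hηc : ContinuousOn η (Set.Icc 0 a)) (hηm : MonotoneOn η (Set.Icc 0 a))
    (hη0 : η 0 = 0) (hηnn : ∀ z ∈ Set.Icc (0 : ℝ) a, 0 ≤ η z)
    (hOsgood : (∫⁻ z in Set.Ioc (0 : ℝ) a, ENNReal.ofReal (1 / η z)) = ⊤)
    (f : ℝ → ℝ) (hf : Measurable f) (hfmem : ∀ t ∈ Set.Icc t₀ T, f t ∈ Set.Icc 0 a)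
    (v : ℝ → ℝ) (hvnn : ∀ s ∈ Set.Icc t₀ T, 0 ≤ v s)
    (hvint : IntegrableOn v (Set.Icc t₀ T))
    (hineq : ∀ᵐ t ∂(volume.restrict (Set.Icc t₀ T)),
      f t ≤ ∫ s in Set.Icc t₀ t, v s * η (f s)) :
    ∀ᵐ t ∂(volume.restrict (Set.Icc t₀ T)), f t = 0 :=
  osgood_zero_general a t₀ T ha η hηc hηm hηnn hOsgood f hf hfmem v hvnn hvint hineq
end

section
/- Let a > 0 and η : [0,a] → (0,∞) on (0,a] be a continuous non-decreasing function with η(0)=0. Let f : [t₀,T] → [0,a] measurable, v locally integrable nonnegative, and c > 0 with f(t) ≤ c + ∫_{t₀}^t v(s) η(f(s)) ds for a.e. t ∈ [t₀,T]. Define M(x) = ∫_x^a dz/η(z). Then M(c) ≤ M(f(t)) + ∫_{t₀}^t v(s) ds for a.e. t. -/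
/-!
Put `R(t) = c + ∫_{t₀}^t v η(f)`, so that `f ≤ R`. Formally `d/dt M(R(t)) = -R'(t)/η(R(t))` and
`R' = v η(f) ≤ v η(R)`, whence `M(c) - M(R(t)) ≤ ∫_{t₀}^t v`. To avoid differentiating `M ∘ R`,
we use that the continuous monotone map `R` pushes the measure `R'(s) ds` on `(t₀,t]` forward to
Lebesgue measure on `(c, R(t)]`; this is the change of variables
`∫_c^{R(t)} dz/η(z) = ∫_{t₀}^t R'(s)/η(R(s)) ds` for a merely integrable `R'`.
-/

open MeasureTheory

/-- `M(x) = ∫_x^a dz/η(z)`, valued in `[0,∞]`. -/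
noncomputable def osgoodM (η : ℝ → ℝ) (a x : ℝ) : ENNReal :=
  ∫⁻ z in Set.Ioc x a, ENNReal.ofReal (1 / η z)

open Set

theorem exists_preimage_Iic_inter_Ioc_eq_Ioc {G : ℝ → ℝ} {a b x : ℝ} (hab : a ≤ b)
    (hGc : ContinuousOn G (Icc a b)) (hGm : MonotoneOn G (Icc a b)) (hx : G a ≤ x) :
    ∃ s ∈ Icc a b, G ⁻¹' Iic x ∩ Ioc a b = Ioc a s ∧ G s = min x (G b) := by
  obtain ⟨s, ⟨hs, hGs⟩, hmax⟩ : ∃ s, IsGreatest (Icc a b ∩ G ⁻¹' Iic x) s :=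
    (isCompact_Icc.of_isClosed_subset (hGc.preimage_isClosed_of_isClosed isClosed_Icc
      isClosed_Iic) inter_subset_left).exists_isGreatest ⟨a, left_mem_Icc.2 hab, hx⟩
  refine ⟨s, hs, ?_, le_antisymm (le_min hGs (hGm hs (right_mem_Icc.2 hab) hs.2)) ?_⟩
  · ext r
    refine ⟨fun ⟨hr, hra, hrb⟩ => ⟨hra, hmax ⟨⟨hra.le, hrb⟩, hr⟩⟩, fun ⟨hra, hrs⟩ => ?_⟩
    have hr : r ∈ Icc a b := ⟨hra.le, hrs.trans hs.2⟩
    exact ⟨(hGm hr hs hrs).trans hGs, hra, hr.2⟩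
  · rcases le_total x (G b) with hxb | hbx
    · obtain ⟨r, hr, hGr⟩ := intermediate_value_Icc hab hGc ⟨hx, hxb⟩
      exact min_le_left _ _ |>.trans (hGr ▸ hGm hr hs (hmax ⟨hr, hGr.le⟩))
    · have hbs : b ≤ s := hmax ⟨right_mem_Icc.2 hab, hbx⟩
      rw [le_antisymm hs.2 hbs]
      exact min_le_right _ _

theorem map_restrict_Ioc_eq_of_measure_Ioc {μ : Measure ℝ} {G : ℝ → ℝ} {a b : ℝ} (hab : a ≤ b)
    (hGc : ContinuousOn G (Icc a b)) (hGm : MonotoneOn G (Icc a b))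
    (hμ : ∀ s ∈ Icc a b, μ (Ioc a s) = ENNReal.ofReal (G s - G a)) :
    (μ.restrict (Ioc a b)).map G = volume.restrict (Ioc (G a) (G b)) := by
  have hGmeas : AEMeasurable G (μ.restrict (Ioc a b)) :=
    (hGc.mono Ioc_subset_Icc_self).aemeasurable measurableSet_Ioc
  have : IsFiniteMeasure (μ.restrict (Ioc a b)) :=
    isFiniteMeasure_restrict.2 (by simp [hμ b ⟨hab, le_rfl⟩])
  refine Measure.ext_of_Iic _ _ fun x => ?_
  rw [Measure.map_apply_of_aemeasurable hGmeas measurableSet_Iic,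
    Measure.restrict_apply' measurableSet_Ioc, Measure.restrict_apply measurableSet_Iic,
    inter_comm (Iic x), Ioc_inter_Iic, Real.volume_Ioc]
  rcases lt_or_ge x (G a) with hxa | hax
  · have hempty : G ⁻¹' Iic x ∩ Ioc a b = ∅ :=
      eq_empty_of_forall_notMem fun r ⟨hr, hra, hrb⟩ =>
        (hxa.trans_le (hGm (left_mem_Icc.2 hab) ⟨hra.le, hrb⟩ hra.le)).not_ge hr
    rw [hempty, measure_empty, eq_comm, ENNReal.ofReal_eq_zero]
    linarith [min_le_right (G b) x]
  · obtain ⟨s, hs, hpre, hGs⟩ := exists_preimage_Iic_inter_Ioc_eq_Ioc hab hGc hGm hax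
    rw [hpre, hμ s hs, hGs, min_comm]

theorem lintegral_Ioc_primitive_eq_lintegral_comp_mul {g : ℝ → ℝ} {a b : ℝ} (c : ℝ) (hab : a ≤ b)
    (hg : IntegrableOn g (Icc a b)) (hg0 : ∀ s ∈ Icc a b, 0 ≤ g s)
    {H : ℝ → ENNReal} (hH : Measurable H) :
    ∫⁻ z in Ioc c (c + ∫ u in a..b, g u), H z
      = ∫⁻ s in Ioc a b, H (c + ∫ u in a..s, g u) * ENNReal.ofReal (g s) := by
  set G : ℝ → ℝ := fun s => c + ∫ u in a..s, g u with hG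
  have hgi : ∀ s ∈ Icc a b, ∀ s' ∈ Icc a b, IntervalIntegrable g volume s s' :=
    fun s hs s' hs' => (hg.mono_set (uIcc_subset_Icc hs hs')).intervalIntegrable
  have hGc : ContinuousOn G (Icc a b) := continuousOn_const.add <|
    uIcc_of_le hab ▸ intervalIntegral.continuousOn_primitive_interval (uIcc_of_le hab ▸ hg)
  have hGsub : ∀ s, G s - G a = ∫ u in a..s, g u := fun s => by simp [hG]
  have hGm : MonotoneOn G (Icc a b) := by
    intro s hs s' hs' hss'
    have hdiff : G s' - G s = ∫ u in s..s', g u := by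
      simp only [hG, add_sub_add_left_eq_sub]
      exact intervalIntegral.integral_interval_sub_left (hgi a (left_mem_Icc.2 hab) s' hs')
        (hgi a (left_mem_Icc.2 hab) s hs)
    have : 0 ≤ ∫ u in s..s', g u :=
      intervalIntegral.integral_nonneg hss' fun u hu => hg0 u ⟨hs.1.trans hu.1, hu.2.trans hs'.2⟩
    linarith
  set μ := volume.withDensity fun s => ENNReal.ofReal (g s)
  have hμ : ∀ s ∈ Icc a b, μ (Ioc a s) = ENNReal.ofReal (G s - G a) := by
    intro s hs
    rw [withDensity_apply _ measurableSet_Ioc, hGsub s, intervalIntegral.integral_of_le hs.1,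
      ofReal_integral_eq_lintegral_ofReal]
    · exact (hg.mono_set (Ioc_subset_Icc_self.trans (Icc_subset_Icc_right hs.2)))
    · filter_upwards [ae_restrict_mem measurableSet_Ioc] with u hu
      exact hg0 u ⟨hu.1.le, hu.2.trans hs.2⟩
  have hGa : G a = c := by simp [hG]
  have hGmeas : AEMeasurable G (μ.restrict (Ioc a b)) :=
    (hGc.mono Ioc_subset_Icc_self).aemeasurable measurableSet_Ioc
  calc ∫⁻ z in Ioc c (G b), H z
      = ∫⁻ z, H z ∂(μ.restrict (Ioc a b)).map G := by
        rw [map_restrict_Ioc_eq_of_measure_Ioc hab hGc hGm hμ, hGa]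
    _ = ∫⁻ s in Ioc a b, H (G s) ∂μ := lintegral_map' hH.aemeasurable hGmeas
    _ = ∫⁻ s in Ioc a b, H (G s) * ENNReal.ofReal (g s) := by
        rw [setLIntegral_withDensity_eq_setLIntegral_mul_non_measurable₀ _
          (hg.mono_set Ioc_subset_Icc_self).aemeasurable.ennreal_ofReal _ measurableSet_Ioc
          (ae_of_all _ fun _ => ENNReal.ofReal_lt_top)]
        simp only [Pi.mul_apply, mul_comm]

theorem lintegral_Ioc_inv_le_of_le_primitive {φ f v : ℝ → ℝ} {t₀ t c : ℝ} (ht : t₀ ≤ t)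
    (hc : 0 < c) (hφ : Monotone φ) (hφpos : ∀ z, 0 < z → 0 < φ z)
    (hv : IntegrableOn v (Icc t₀ t)) (hv0 : ∀ s ∈ Icc t₀ t, 0 ≤ v s)
    (hg : IntegrableOn (fun s => v s * φ (f s)) (Icc t₀ t))
    (hφf : ∀ s ∈ Icc t₀ t, 0 ≤ φ (f s))
    (hf : ∀ᵐ s ∂volume.restrict (Ioc t₀ t), f s ≤ c + ∫ u in t₀..s, v u * φ (f u)) :
    ∫⁻ z in Ioc c (c + ∫ u in t₀..t, v u * φ (f u)), ENNReal.ofReal (1 / φ z)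
      ≤ ENNReal.ofReal (∫ s in t₀..t, v s) := by
  have hg0 : ∀ s ∈ Icc t₀ t, 0 ≤ v s * φ (f s) := fun s hs => mul_nonneg (hv0 s hs) (hφf s hs)
  rw [lintegral_Ioc_primitive_eq_lintegral_comp_mul c ht hg hg0
      (H := fun z => ENNReal.ofReal (1 / φ z)) (measurable_const.div hφ.measurable).ennreal_ofReal,
    intervalIntegral.integral_of_le ht, ofReal_integral_eq_lintegral_ofReal
      (hv.mono_set Ioc_subset_Icc_self)
      ((ae_restrict_mem measurableSet_Ioc).mono fun s hs => hv0 s (Ioc_subset_Icc_self hs))]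
  refine lintegral_mono_ae ?_
  filter_upwards [hf, ae_restrict_mem measurableSet_Ioc] with s hfs hs
  set R := c + ∫ u in t₀..s, v u * φ (f u)
  have hRpos : 0 < φ R := hφpos R <| hc.trans_le <| le_add_of_nonneg_right <|
    intervalIntegral.integral_nonneg hs.1.le fun u hu => hg0 u ⟨hu.1, hu.2.trans hs.2⟩
  have hs' : s ∈ Icc t₀ t := Ioc_subset_Icc_self hs
  rw [← ENNReal.ofReal_mul (by positivity)]
  refine ENNReal.ofReal_le_ofReal ?_
  calc 1 / φ R * (v s * φ (f s)) = v s * (φ (f s) / φ R) := by ring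
    _ ≤ v s * 1 := mul_le_mul_of_nonneg_left
        ((div_le_one hRpos).2 (hφ hfs)) (hv0 s hs')
    _ = v s := mul_one _

theorem osgoodM_le_lintegral_Ioc_add (η : ℝ → ℝ) (a c x : ℝ) :
    osgoodM η a c ≤ (∫⁻ z in Ioc c x, ENNReal.ofReal (1 / η z)) + osgoodM η a x :=
  (lintegral_mono_set Ioc_subset_Ioc_union_Ioc).trans (lintegral_union_le _ _ _)

theorem exists_monotone_extension {η : ℝ → ℝ} {a : ℝ} (ha : 0 < a)
    (hηm : MonotoneOn η (Icc 0 a)) (hη0 : η 0 = 0) (hηpos : ∀ z ∈ Ioc 0 a, 0 < η z) :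
    ∃ φ : ℝ → ℝ, Monotone φ ∧ EqOn φ η (Icc 0 a) ∧ (∀ z, φ z ∈ Icc 0 (η a)) ∧
      ∀ z, 0 < z → 0 < φ z := by
  set p := projIcc 0 a ha.le
  refine ⟨fun z => η (p z), fun _ _ h => hηm (p _).2 (p _).2 (monotone_projIcc ha.le h),
    fun z hz => by simp [p, projIcc_of_mem _ hz], fun z => ⟨?_, ?_⟩, fun z hz => hηpos _ ⟨?_, (p z).2.2⟩⟩
  · exact hη0.symm.trans_le (hηm (left_mem_Icc.2 ha.le) (p z).2 (p z).2.1)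
  · exact hηm (p z).2 (right_mem_Icc.2 ha.le) (p z).2.2
  · rw [coe_projIcc]
    exact lt_max_of_lt_right (lt_min ha hz)

theorem ae_lintegral_Ioc_inv_le_of_le_integral {φ f v : ℝ → ℝ} {t₀ T c C : ℝ} (hc : 0 < c)
    (hφ : Monotone φ) (hφpos : ∀ z, 0 < z → 0 < φ z) (hφC : ∀ z, φ z ∈ Icc 0 C)
    (hf : Measurable f) (hv : IntegrableOn v (Icc t₀ T)) (hv0 : ∀ s ∈ Icc t₀ T, 0 ≤ v s)
    (hineq : ∀ᵐ t ∂volume.restrict (Icc t₀ T), f t ≤ c + ∫ s in Icc t₀ t, v s * φ (f s)) :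
    ∀ᵐ t ∂volume.restrict (Icc t₀ T),
      ∫⁻ z in Ioc c (f t), ENNReal.ofReal (1 / φ z) ≤ ENNReal.ofReal (∫ s in Icc t₀ t, v s) := by
  have hIcc : ∀ {g : ℝ → ℝ}, ∀ t ∈ Icc t₀ T, ∫ s in Icc t₀ t, g s = ∫ s in t₀..t, g s :=
    fun t ht => by rw [intervalIntegral.integral_of_le ht.1, integral_Icc_eq_integral_Ioc]
  have hineq' : ∀ᵐ t ∂volume.restrict (Icc t₀ T),
      t ∈ Icc t₀ T ∧ f t ≤ c + ∫ s in t₀..t, v s * φ (f s) := by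
    filter_upwards [hineq, ae_restrict_mem measurableSet_Icc] with t h ht
    exact ⟨ht, hIcc t ht ▸ h⟩
  filter_upwards [hineq'] with t ⟨ht, hft⟩
  have hsub : Icc t₀ t ⊆ Icc t₀ T := Icc_subset_Icc_right ht.2
  have hg : IntegrableOn (fun s => v s * φ (f s)) (Icc t₀ t) :=
    (hv.mono_set hsub).mul_bdd (hφ.measurable.comp hf).aestronglyMeasurable
      (ae_of_all _ fun s => (Real.norm_of_nonneg (hφC _).1).trans_le (hφC _).2)
  calc ∫⁻ z in Ioc c (f t), ENNReal.ofReal (1 / φ z)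
      ≤ ∫⁻ z in Ioc c (c + ∫ s in t₀..t, v s * φ (f s)), ENNReal.ofReal (1 / φ z) :=
        lintegral_mono_set (Ioc_subset_Ioc_right hft)
    _ ≤ ENNReal.ofReal (∫ s in t₀..t, v s) :=
        lintegral_Ioc_inv_le_of_le_primitive ht.1 hc hφ hφpos (hv.mono_set hsub)
          (fun s hs => hv0 s (hsub hs)) hg (fun s _ => (hφC _).1)
          (ae_restrict_of_ae_restrict_of_subset (Ioc_subset_Icc_self.trans hsub)
            (hineq'.mono fun _ hs => hs.2))
    _ = ENNReal.ofReal (∫ s in Icc t₀ t, v s) := by rw [hIcc t ht]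

theorem osgood_pos_general (a t₀ T c : ℝ) (ha : 0 < a) (hc : 0 < c)
    (η : ℝ → ℝ) (hηm : MonotoneOn η (Set.Icc 0 a))
    (hη0 : η 0 = 0) (hηpos : ∀ z ∈ Set.Ioc (0 : ℝ) a, 0 < η z)
    (f : ℝ → ℝ) (hf : Measurable f) (hfmem : ∀ t ∈ Set.Icc t₀ T, f t ∈ Set.Icc 0 a)
    (v : ℝ → ℝ) (hvnn : ∀ s ∈ Set.Icc t₀ T, 0 ≤ v s)
    (hvint : IntegrableOn v (Set.Icc t₀ T))
    (hineq : ∀ᵐ t ∂(volume.restrict (Set.Icc t₀ T)),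
      f t ≤ c + ∫ s in Set.Icc t₀ t, v s * η (f s)) :
    ∀ᵐ t ∂(volume.restrict (Set.Icc t₀ T)),
      osgoodM η a c ≤ osgoodM η a (f t) + ENNReal.ofReal (∫ s in Set.Icc t₀ t, v s) := by
  obtain ⟨φ, hφ, hφη, hφb, hφpos⟩ := exists_monotone_extension ha hηm hη0 hηpos
  have hineq' : ∀ᵐ t ∂volume.restrict (Icc t₀ T), f t ≤ c + ∫ s in Icc t₀ t, v s * φ (f s) := by
    filter_upwards [hineq, ae_restrict_mem measurableSet_Icc] with t h ht
    rwa [setIntegral_congr_fun measurableSet_Icc fun s hs =>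
      by rw [hφη (hfmem s ⟨hs.1, hs.2.trans ht.2⟩)]]
  filter_upwards [ae_lintegral_Ioc_inv_le_of_le_integral hc hφ hφpos hφb hf hvint hvnn hineq',
    ae_restrict_mem measurableSet_Icc] with t hφt ht
  calc osgoodM η a c
      ≤ (∫⁻ z in Ioc c (f t), ENNReal.ofReal (1 / η z)) + osgoodM η a (f t) :=
        osgoodM_le_lintegral_Ioc_add η a c (f t)
    _ = (∫⁻ z in Ioc c (f t), ENNReal.ofReal (1 / φ z)) + osgoodM η a (f t) := by
        rw [setLIntegral_congr_fun measurableSet_Ioc fun z hz =>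
          by rw [← hφη ⟨hc.le.trans hz.1.le, hz.2.trans (hfmem t ht).2⟩]]
    _ ≤ osgoodM η a (f t) + ENNReal.ofReal (∫ s in Icc t₀ t, v s) := by
        rw [add_comm]
        gcongr

/-- Osgood's lemma, quantitative case `c > 0`: if
`f(t) ≤ c + ∫_{t₀}^t v(s) η(f(s)) ds` for a.e. `t ∈ [t₀,T]`, then
`M(c) ≤ M(f(t)) + ∫_{t₀}^t v(s) ds` for a.e. `t`, where `M(x) = ∫_x^a dz/η(z)`. -/
theorem osgood_pos (a t₀ T c : ℝ) (ha : 0 < a) (htT : t₀ ≤ T) (hc : 0 < c)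
    (η : ℝ → ℝ) (hηc : ContinuousOn η (Set.Icc 0 a)) (hηm : MonotoneOn η (Set.Icc 0 a))
    (hη0 : η 0 = 0) (hηpos : ∀ z ∈ Set.Ioc (0 : ℝ) a, 0 < η z)
    (f : ℝ → ℝ) (hf : Measurable f) (hfmem : ∀ t ∈ Set.Icc t₀ T, f t ∈ Set.Icc 0 a)
    (v : ℝ → ℝ) (hvnn : ∀ s ∈ Set.Icc t₀ T, 0 ≤ v s)
    (hvint : IntegrableOn v (Set.Icc t₀ T))
    (hineq : ∀ᵐ t ∂(volume.restrict (Set.Icc t₀ T)),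
      f t ≤ c + ∫ s in Set.Icc t₀ t, v s * η (f s)) :
    ∀ᵐ t ∂(volume.restrict (Set.Icc t₀ T)),
      osgoodM η a c ≤ osgoodM η a (f t) + ENNReal.ofReal (∫ s in Set.Icc t₀ t, v s) :=
  osgood_pos_general a t₀ T c ha hc η hηm hη0 hηpos f hf hfmem v hvnn hvint hineq
end

section
/- Let u : [0,T] × ℝ³ → ℝ³ be a continuous time-dependent vector field that is log-Lipschitz in space uniformly in time, with constant C: |u(t,x)−u(t,y)| ≤ C|x−y|(1 + ln₋|x−y|), and let X be its flow with ∂_t X(t,0,x) = u(t, X(t,0,x)), X(0,0,x) = x. Then there exists a constant C̄ such that for all x, y with |x−y| ≤ 1/2 and all t ∈ [0,T] with e·|x−y|^{e^{−Ct}} ≤ 1, |X(t,0,x) − X(t,0,y)| ≤ C̄ |x−y|^{e^{−CT}}. -/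
set_option maxHeartbeats 1600000


/-- Hölder continuity of the flow of a log-Lipschitz vector field: if
`|u(t,x)−u(t,y)| ≤ C|x−y|(1 + ln₋|x−y|)` and `X` is the flow of `u`, then there is `C̄`
such that for `|x−y| ≤ 1/2` and `t ∈ [0,T]` with `e·|x−y|^{exp(−Ct)} ≤ 1`,
`|X(t,x) − X(t,y)| ≤ C̄ |x−y|^{exp(−CT)}`. -/
theorem flow_logLipschitz_holder (T C : ℝ) (hT : 0 ≤ T) (hC : 0 < C)
    (u : ℝ → EuclideanSpace ℝ (Fin 3) → EuclideanSpace ℝ (Fin 3))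
    (hu : Continuous fun p : ℝ × EuclideanSpace ℝ (Fin 3) => u p.1 p.2)
    (hLL : ∀ t ∈ Set.Icc (0 : ℝ) T, ∀ x y,
      ‖u t x - u t y‖ ≤ C * ‖x - y‖ * (1 + max 0 (-Real.log ‖x - y‖)))
    (X : ℝ → EuclideanSpace ℝ (Fin 3) → EuclideanSpace ℝ (Fin 3))
    (hX0 : ∀ x, X 0 x = x)
    (hODE : ∀ x, ∀ t ∈ Set.Icc (0 : ℝ) T, HasDerivAt (fun τ => X τ x) (u t (X t x)) t) :
    ∃ Cbar : ℝ, 0 < Cbar ∧ ∀ t ∈ Set.Icc (0 : ℝ) T,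
      ∀ x y : EuclideanSpace ℝ (Fin 3), ‖x - y‖ ≤ 1 / 2 →
        Real.exp 1 * ‖x - y‖ ^ Real.exp (-C * t) ≤ 1 →
        ‖X t x - X t y‖ ≤ Cbar * ‖x - y‖ ^ Real.exp (-C * T) := by
  rcases eq_or_lt_of_le hT with hT0 | hT0
  · -- T = 0 : only t = 0 is possible
    refine ⟨1, one_pos, ?_⟩
    intro t ht x y _ _
    have htt : t = 0 := le_antisymm (hT0 ▸ ht.2) ht.1
    subst htt
    rw [hX0, hX0, one_mul, ← hT0, mul_zero, Real.exp_zero, Real.rpow_one]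
  -- main case : T > 0
  have hE : Real.exp (-C * T) < 1 := by
    rw [Real.exp_lt_one_iff]; nlinarith
  have hden : 0 < 1 - Real.exp (-C * T) := by linarith
  set a₀ : ℝ := 1 / (1 - Real.exp (-C * T)) with ha₀def
  have ha₀1 : 1 < a₀ := one_lt_one_div hden (by linarith [Real.exp_pos (-C * T)])
  have hprodT : Real.exp (-C * T) * Real.exp (C * T) = 1 := by
    rw [← Real.exp_add]; simp
  have hA : a₀ * (Real.exp (C * T) - 1) = Real.exp (C * T) := by
    rw [ha₀def, div_mul_eq_mul_div, one_mul, div_eq_iff hden.ne']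
    linear_combination hprodT
  refine ⟨Real.exp a₀, Real.exp_pos _, ?_⟩
  intro t ht x y hhalf hsmall
  rcases eq_or_lt_of_le (norm_nonneg (x - y)) with hr0 | hr0
  · -- ‖x - y‖ = 0 : x = y
    have hxy : x = y := by
      rwa [eq_comm, norm_eq_zero, sub_eq_zero] at hr0
    subst hxy
    simp [Real.zero_rpow (Real.exp_ne_zero (-C * T))]
  -- r > 0 case
  set r : ℝ := ‖x - y‖ with hrdef
  set L : ℝ := Real.log r with hLdef
  have hrlt1 : r < 1 := lt_of_le_of_lt hhalf (by norm_num)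
  have hLneg : L < 0 := Real.log_neg hr0 hrlt1
  -- from the smallness hypothesis : exp (C*t) ≤ -L
  have hkey0 : L * Real.exp (-C * t) ≤ -1 := by
    have h1 : r ^ Real.exp (-C * t) = Real.exp (L * Real.exp (-C * t)) := by
      rw [Real.rpow_def_of_pos hr0]
    rw [h1, ← Real.exp_add] at hsmall
    have := Real.exp_le_one_iff.mp hsmall
    linarith
  have hprodt : Real.exp (-C * t) * Real.exp (C * t) = 1 := by
    rw [← Real.exp_add]; simp
  have hkey : Real.exp (C * t) ≤ -L := by
    have h2 := mul_le_mul_of_nonneg_right hkey0 (Real.exp_pos (C * t)).le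
    have h3 : L * Real.exp (-C * t) * Real.exp (C * t) = L := by
      rw [mul_assoc, hprodt, mul_one]
    nlinarith
  have hexpttT : Real.exp (C * t) ≤ Real.exp (C * T) := by
    apply Real.exp_le_exp.mpr; nlinarith [ht.2]
  -- arithmetic key : for 0 ≤ s ≤ t, a₀ * (exp (C*s) - 1) ≤ -L
  have hKey : ∀ s, 0 ≤ s → s ≤ t → a₀ * (Real.exp (C * s) - 1) ≤ -L := by
    intro s hs0 hst
    have h1 : Real.exp (C * s) ≤ Real.exp (C * t) := by
      apply Real.exp_le_exp.mpr; nlinarith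
    have h3 : a₀ * (Real.exp (C * t) - 1) ≤ Real.exp (C * t) := by
      nlinarith [mul_nonneg (by linarith : (0:ℝ) ≤ a₀ - 1)
        (by linarith : (0:ℝ) ≤ Real.exp (C * T) - Real.exp (C * t))]
    nlinarith
  -- the barrier function
  set B : ℝ → ℝ := fun s => Real.exp (a₀ - (a₀ - L) * Real.exp (-C * s)) with hBdef
  set B' : ℝ → ℝ := fun s => (a₀ - L) * C * Real.exp (-C * s) * B s with hB'def
  have hB : ∀ s, HasDerivAt B (B' s) s := by
    intro s
    have h1 : HasDerivAt (fun s : ℝ => -C * s) (-C) s := by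
      simpa using (hasDerivAt_id s).const_mul (-C)
    have h2 : HasDerivAt (fun s : ℝ => Real.exp (-C * s)) (Real.exp (-C * s) * -C) s :=
      h1.exp
    have h3 : HasDerivAt (fun s : ℝ => a₀ - (a₀ - L) * Real.exp (-C * s))
        (-((a₀ - L) * (Real.exp (-C * s) * -C))) s :=
      (h2.const_mul (a₀ - L)).const_sub a₀
    have h4 := h3.exp
    convert h4 using 1
    show (a₀ - L) * C * Real.exp (-C * s) * Real.exp (a₀ - (a₀ - L) * Real.exp (-C * s)) = _
    ring
  set f : ℝ → EuclideanSpace ℝ (Fin 3) := fun s => X s x - X s y with hfdef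
  set f' : ℝ → EuclideanSpace ℝ (Fin 3) := fun s => u s (X s x) - u s (X s y) with hf'def
  have hmem : ∀ s ∈ Set.Icc (0:ℝ) t, s ∈ Set.Icc (0:ℝ) T := fun s hs =>
    ⟨hs.1, hs.2.trans ht.2⟩
  have hfderiv : ∀ s ∈ Set.Icc (0:ℝ) t, HasDerivAt f (f' s) s := by
    intro s hs
    exact (hODE x s (hmem s hs)).sub (hODE y s (hmem s hs))
  have hf : ContinuousOn f (Set.Icc 0 t) := fun s hs =>
    (hfderiv s hs).continuousAt.continuousWithinAt
  have hf' : ∀ s ∈ Set.Ico (0:ℝ) t, HasDerivWithinAt f (f' s) (Set.Ici s) s := fun s hs =>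
    (hfderiv s ⟨hs.1, hs.2.le⟩).hasDerivWithinAt
  have hB0 : B 0 = r := by
    show Real.exp (a₀ - (a₀ - L) * Real.exp (-C * 0)) = r
    rw [mul_zero, Real.exp_zero, mul_one,
      show a₀ - (a₀ - L) = L by ring, hLdef, Real.exp_log hr0]
  have ha : ‖f 0‖ ≤ B 0 := by
    rw [hB0]
    show ‖X 0 x - X 0 y‖ ≤ r
    rw [hX0, hX0]
  have bound : ∀ s ∈ Set.Ico (0:ℝ) t, ‖f s‖ = B s → ‖f' s‖ < B' s := by
    intro s hs heq
    have hsIcc : s ∈ Set.Icc (0:ℝ) T := hmem s ⟨hs.1, hs.2.le⟩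
    have hBpos : 0 < B s := Real.exp_pos _
    have hEs : 0 < Real.exp (-C * s) := Real.exp_pos _
    have hprods : Real.exp (C * s) * Real.exp (-C * s) = 1 := by
      rw [← Real.exp_add]; simp
    have hK := hKey s hs.1 hs.2.le
    -- log (B s) ≤ 0
    have hm : a₀ * Real.exp (C * s) ≤ a₀ - L := by nlinarith
    have hm2 := mul_le_mul_of_nonneg_right hm hEs.le
    have hm3 : a₀ * Real.exp (C * s) * Real.exp (-C * s) = a₀ := by
      rw [mul_assoc, hprods, mul_one]
    have hlogB : a₀ - (a₀ - L) * Real.exp (-C * s) ≤ 0 := by nlinarith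
    have hlogBs : Real.log (B s) = a₀ - (a₀ - L) * Real.exp (-C * s) := Real.log_exp _
    have h0 : ‖f' s‖ ≤ C * ‖f s‖ * (1 + max 0 (-Real.log ‖f s‖)) :=
      hLL s hsIcc (X s x) (X s y)
    rw [heq] at h0
    have hmax : max 0 (-Real.log (B s)) = -Real.log (B s) := by
      rw [max_eq_right]; linarith [hlogBs ▸ hlogB]
    rw [hmax, hlogBs] at h0
    calc ‖f' s‖ ≤ C * B s * (1 + -(a₀ - (a₀ - L) * Real.exp (-C * s))) := h0
      _ < (a₀ - L) * C * Real.exp (-C * s) * B s := by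
          nlinarith [mul_pos (mul_pos hC hBpos) (show (0:ℝ) < a₀ - 1 by linarith)]
      _ = B' s := rfl
  have hft : ‖f t‖ ≤ B t :=
    image_norm_le_of_norm_deriv_right_lt_deriv_boundary hf hf' ha hB bound
      (Set.right_mem_Icc.mpr ht.1)
  -- conclude
  have hBt : B t ≤ Real.exp a₀ * r ^ Real.exp (-C * T) := by
    have h1 : B t = Real.exp (a₀ * (1 - Real.exp (-C * t))) * r ^ Real.exp (-C * t) := by
      show Real.exp (a₀ - (a₀ - L) * Real.exp (-C * t)) = _
      rw [Real.rpow_def_of_pos hr0, ← Real.exp_add, ← hLdef]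
      congr 1
      ring
    rw [h1]
    have h2 : Real.exp (a₀ * (1 - Real.exp (-C * t))) ≤ Real.exp a₀ := by
      apply Real.exp_le_exp.mpr
      nlinarith [Real.exp_pos (-C * t)]
    have h3 : r ^ Real.exp (-C * t) ≤ r ^ Real.exp (-C * T) := by
      apply Real.rpow_le_rpow_of_exponent_ge hr0 hrlt1.le
      apply Real.exp_le_exp.mpr
      nlinarith [ht.2]
    have h4 : (0:ℝ) ≤ r ^ Real.exp (-C * t) := Real.rpow_nonneg hr0.le _
    exact mul_le_mul h2 h3 h4 (Real.exp_pos _).le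
  exact hft.trans hBt
end
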